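/- arXiv:math/0312197 — 3 statements merged into one kernel-verified Lean document; each statement's English description precedes it below -/
import Mathlib

section
/- A map of simplicial sets (or topological spaces) f : X → Y which is a weak homotopy equivalence remains a weak equivalence after pullback along any Serre/Kan fibration p : E → Y; i.e., in a right proper model category, the pullback of a weak equivalence along a fibration is a weak equivalence. -/
open unitInterval Topology Topology.Homotopy

noncomputable section

variable {X Y : Type*} [TopologicalSpace X] [TopologicalSpace Y]

/-- The map on generalized loops induced by postcomposition with a continuous map. -/
def GenLoop.induced {N : Type*} (f : C(X, Y)) {x : X} (g : Ω^ N X x) : Ω^ N Y (f x) :=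
  ⟨f.comp g.1, fun y hy => show f (g.1 y) = f x from congrArg f (g.2 y hy)⟩

/-- The induced map on homotopy groups of a continuous map. -/
def HomotopyGroup.induced (N : Type*) (f : C(X, Y)) (x : X) :
    HomotopyGroup N X x → HomotopyGroup N Y (f x) :=
  Quotient.map (GenLoop.induced f)
    (fun _ _ h => Nonempty.map (fun F => F.compContinuousMap f) h)

/-- The induced map on path components of a continuous map. -/
def ZerothHomotopy.induced (f : C(X, Y)) : ZerothHomotopy X → ZerothHomotopy Y :=
  Quotient.map f (fun _ _ h => Nonempty.map (fun γ => γ.map f.continuous) h)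

/-- A continuous map is a weak homotopy equivalence if it induces a bijection on path
components and on all homotopy groups at all basepoints. -/
def IsWeakHomotopyEquiv (f : C(X, Y)) : Prop :=
  Function.Bijective (ZerothHomotopy.induced f) ∧
    ∀ (n : ℕ) (x : X), Function.Bijective (HomotopyGroup.induced (Fin n) f x)

/-- A continuous map is a Serre fibration if it has the homotopy lifting property with
respect to all cubes. -/
def IsSerreFibration {E B : Type*} [TopologicalSpace E] [TopologicalSpace B]
    (p : C(E, B)) : Prop :=
  ∀ (n : ℕ) (H : C((Fin n → I) × I, B)) (h : C(Fin n → I, E)),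
    (∀ y, p (h y) = H (y, 0)) →
    ∃ G : C((Fin n → I) × I, E), (∀ z, p (G z) = H z) ∧ ∀ y, G (y, 0) = h y

namespace RightProper


/-! ### 2-dimensional square homeomorphism, real formulas -/

def phiX (r t : ℝ) : ℝ := min (2*r) (min (r/2 - 3*t/4 + 3/4) (1 - t/2))
def phiT (r t : ℝ) : ℝ := max t (2*r - 1)
def psiX (r t : ℝ) : ℝ := max (r/2) (min (2*r + 3*t/2 - 3/2) ((t+1)/2))
def psiT (r t : ℝ) : ℝ := min t (2 - 2*r)

variable {r t : ℝ}

lemma phiX_nonneg (hr : 0 ≤ r) (ht : t ≤ 1) : 0 ≤ phiX r t := by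
  unfold phiX; simp only [le_min_iff]; refine ⟨by linarith, by linarith, by linarith⟩

lemma phiX_le : phiX r t ≤ 2*r := min_le_left _ _

lemma phiX_le_one (ht : 0 ≤ t) : phiX r t ≤ 1 :=
  le_trans (min_le_right _ _) (le_trans (min_le_right _ _) (by linarith))

lemma phiT_nonneg (ht0 : 0 ≤ t) : 0 ≤ phiT r t := le_trans ht0 (le_max_left _ _)

lemma phiT_le_one (hr : r ≤ 1) (ht1 : t ≤ 1) : phiT r t ≤ 1 := by
  unfold phiT; simp only [max_le_iff]; exact ⟨ht1, by linarith⟩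

lemma psiX_nonneg (hr : 0 ≤ r) : 0 ≤ psiX r t := le_trans (by linarith) (le_max_left _ _)

lemma psiX_le_one (hr : r ≤ 1) (ht : t ≤ 1) : psiX r t ≤ 1 := by
  unfold psiX; simp only [max_le_iff]
  exact ⟨by linarith, le_trans (min_le_right _ _) (by linarith)⟩

lemma psiX_pos (hr : 0 < r) : 0 < psiX r t := lt_of_lt_of_le (by linarith) (le_max_left _ _)

lemma psiT_nonneg (hr1 : r ≤ 1) (ht0 : 0 ≤ t) : 0 ≤ psiT r t := by
  unfold psiT; simp only [le_min_iff]; exact ⟨ht0, by linarith⟩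

lemma psiT_le_one (ht1 : t ≤ 1) : psiT r t ≤ 1 := le_trans (min_le_left _ _) ht1

lemma phiX_pos (hr : 0 < r) (ht : t ≤ 1) : 0 < phiX r t := by
  unfold phiX; simp only [lt_min_iff]; exact ⟨by linarith, by linarith, by linarith⟩

/- closed forms on the three regions of `phi` -/
lemma phiX_eqA (h : 2*r + t ≤ 1) (ht : 0 ≤ t) : phiX r t = 2*r :=
  min_eq_left (le_min (by linarith) (by linarith))

lemma phiT_eqA (h : 2*r + t ≤ 1) (ht : 0 ≤ t) : phiT r t = t := max_eq_left (by linarith)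

lemma phiX_eqB (h1 : 1 ≤ 2*r + t) (h2 : 2*r - t ≤ 1) : phiX r t = r/2 - 3*t/4 + 3/4 := by
  unfold phiX
  rw [show min (r/2 - 3*t/4 + 3/4) (1 - t/2) = r/2 - 3*t/4 + 3/4 from min_eq_left (by linarith),
    min_eq_right (by linarith)]

lemma phiT_eqB (h2 : 2*r - t ≤ 1) : phiT r t = t := max_eq_left (by linarith)

lemma phiX_eqC (h : 1 ≤ 2*r - t) (ht : 0 ≤ t) : phiX r t = 1 - t/2 := by
  unfold phiX
  rw [show min (r/2 - 3*t/4 + 3/4) (1 - t/2) = 1 - t/2 from min_eq_right (by linarith),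
    min_eq_right (by linarith)]

lemma phiT_eqC (h : 1 ≤ 2*r - t) : phiT r t = 2*r - 1 := max_eq_right (by linarith)

/- closed forms on the three regions of `psi` -/
lemma psiX_eqA (h : r + t ≤ 1) : psiX r t = r/2 :=
  max_eq_left (le_trans (min_le_left _ _) (by linarith))

lemma psiT_eqA (h : r + t ≤ 1) (hr : r ≤ 1) : psiT r t = t := min_eq_left (by linarith)

lemma psiX_eqB (h1 : 1 ≤ r + t) (h2 : 2*r + t ≤ 2) : psiX r t = 2*r + 3*t/2 - 3/2 := by
  unfold psiX
  rw [min_eq_left (by linarith), max_eq_right (by linarith)]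

lemma psiT_eqB (h2 : 2*r + t ≤ 2) : psiT r t = t := min_eq_left (by linarith)

lemma psiX_eqC (h : 2 ≤ 2*r + t) (hr : r ≤ 1) : psiX r t = (t+1)/2 := by
  unfold psiX
  rw [min_eq_right (by linarith), max_eq_right (by linarith)]

lemma psiT_eqC (h : 2 ≤ 2*r + t) : psiT r t = 2 - 2*r := min_eq_right (by linarith)

lemma psi_phi_X (hr0 : 0 ≤ r) (hr1 : r ≤ 1) (ht0 : 0 ≤ t) (ht1 : t ≤ 1) :
    psiX (phiX r t) (phiT r t) = r := by
  rcases le_total (2*r + t) 1 with h | h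
  · rw [phiX_eqA h ht0, phiT_eqA h ht0, psiX_eqA (by linarith)]; ring
  · rcases le_total (2*r - t) 1 with h2 | h2
    · rw [phiX_eqB h h2, phiT_eqB h2,
        psiX_eqB (by linarith) (by linarith)]; ring
    · rw [phiX_eqC h2 ht0, phiT_eqC h2,
        psiX_eqC (by linarith) (by linarith)]; ring

lemma psi_phi_T (hr0 : 0 ≤ r) (hr1 : r ≤ 1) (ht0 : 0 ≤ t) (ht1 : t ≤ 1) :
    psiT (phiX r t) (phiT r t) = t := by
  rcases le_total (2*r + t) 1 with h | h
  · rw [phiX_eqA h ht0, phiT_eqA h ht0, psiT_eqA (by linarith) (by linarith)]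
  · rcases le_total (2*r - t) 1 with h2 | h2
    · rw [phiX_eqB h h2, phiT_eqB h2, psiT_eqB (by linarith)]
    · rw [phiX_eqC h2 ht0, phiT_eqC h2, psiT_eqC (by linarith)]; linarith

lemma phi_psi_X (hr0 : 0 ≤ r) (hr1 : r ≤ 1) (ht0 : 0 ≤ t) (ht1 : t ≤ 1) :
    phiX (psiX r t) (psiT r t) = r := by
  rcases le_total (r + t) 1 with h | h
  · rw [psiX_eqA h, psiT_eqA h hr1, phiX_eqA (by linarith) ht0]; ring
  · rcases le_total (2*r + t) 2 with h2 | h2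
    · rw [psiX_eqB h h2, psiT_eqB h2, phiX_eqB (by linarith) (by linarith)]; ring
    · rw [psiX_eqC h2 hr1, psiT_eqC h2, phiX_eqC (by linarith) (by linarith)]; linarith

lemma phi_psi_T (hr0 : 0 ≤ r) (hr1 : r ≤ 1) (ht0 : 0 ≤ t) (ht1 : t ≤ 1) :
    phiT (psiX r t) (psiT r t) = t := by
  rcases le_total (r + t) 1 with h | h
  · rw [psiX_eqA h, psiT_eqA h hr1, phiT_eqA (by linarith) ht0]
  · rcases le_total (2*r + t) 2 with h2 | h2
    · rw [psiX_eqB h h2, psiT_eqB h2, phiT_eqB (by linarith)]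
    · rw [psiX_eqC h2 hr1, psiT_eqC h2, phiT_eqC (by linarith)]; linarith

/- slice formulas -/
lemma phiX_zero (hr0 : 0 ≤ r) (hr1 : r ≤ 1) : phiX r 0 = min (2*r) 1 := by
  unfold phiX
  rcases le_total r (1/2) with h | h
  · rw [min_eq_left (le_min (by linarith) (by linarith)), min_eq_left (by linarith)]
  · rw [show min (r/2 - 3*0/4 + 3/4) (1 - 0/2) = 1 by rw [min_eq_right (by linarith)]; ring,
      min_eq_right (by linarith)]

lemma phiT_zero (hr1 : r ≤ 1) : phiT r 0 = max 0 (2*r - 1) := rfl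

lemma psiX_zero (hr0 : 0 ≤ r) (hr1 : r ≤ 1) : psiX r 0 = r/2 := psiX_eqA (by linarith)

lemma psiT_zero (hr1 : r ≤ 1) : psiT r 0 = 0 := min_eq_left (by linarith)

lemma psiX_one' (ht0 : 0 ≤ t) (ht1 : t ≤ 1) : psiX 1 t = (t+1)/2 := psiX_eqC (by linarith) le_rfl

lemma psiT_one' (ht0 : 0 ≤ t) : psiT 1 t = 0 := by unfold psiT; rw [min_eq_right (by linarith)]; ring

/-! ### sup-norm on the cube, radial scaling -/

open scoped NNReal

variable {k : ℕ}

def cubeNorm (y : Fin k → I) : ℝ :=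
  ↑(Finset.univ.sup fun i => Real.toNNReal |2 * (y i : ℝ) - 1|)

lemma cubeNorm_nonneg (y : Fin k → I) : 0 ≤ cubeNorm y := NNReal.coe_nonneg _

lemma abs_le_cubeNorm (y : Fin k → I) (i : Fin k) : |2 * (y i : ℝ) - 1| ≤ cubeNorm y := by
  have h := Finset.le_sup (f := fun i => Real.toNNReal |2 * (y i : ℝ) - 1|)
    (Finset.mem_univ i)
  have h2 := NNReal.coe_le_coe.2 h
  rwa [Real.coe_toNNReal _ (abs_nonneg _)] at h2

lemma cubeNorm_le_one (y : Fin k → I) : cubeNorm y ≤ 1 := by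
  have : (Finset.univ.sup fun i => Real.toNNReal |2 * (y i : ℝ) - 1|) ≤ 1 := by
    refine Finset.sup_le fun i _ => ?_
    rw [← NNReal.coe_le_coe, Real.coe_toNNReal _ (abs_nonneg _), NNReal.coe_one, abs_le]
    constructor <;> nlinarith [(y i).2.1, (y i).2.2]
  exact_mod_cast this

lemma continuous_cubeNorm : Continuous (cubeNorm (k := k)) := by
  apply NNReal.continuous_coe.comp
  classical
  have : ∀ s : Finset (Fin k), Continuous fun y : Fin k → I =>
      s.sup fun i => Real.toNNReal |2 * (y i : ℝ) - 1| := by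
    intro s
    induction s using Finset.induction_on with
    | empty => simpa using continuous_const
    | insert _ _ h ih =>
        simp only [Finset.sup_insert]
        exact Continuous.sup (continuous_real_toNNReal.comp
          ((continuous_abs.comp (by fun_prop)))) ih
  exact this Finset.univ

lemma cubeNorm_eq_one_of_boundary {y : Fin k → I} (h : y ∈ Cube.boundary (Fin k)) :
    cubeNorm y = 1 := by
  obtain ⟨i, hi⟩ := h
  refine le_antisymm (cubeNorm_le_one y) ?_
  have : |2 * (y i : ℝ) - 1| = 1 := by
    rcases hi with hi | hi <;> rw [hi] <;> norm_num
  calc (1:ℝ) = |2 * (y i : ℝ) - 1| := this.symm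
    _ ≤ cubeNorm y := abs_le_cubeNorm y i

lemma boundary_of_cubeNorm_eq_one {y : Fin k → I} (h : cubeNorm y = 1) :
    y ∈ Cube.boundary (Fin k) := by
  cases isEmpty_or_nonempty (Fin k) with
  | inl hk =>
      exfalso
      have : cubeNorm y = 0 := by
        unfold cubeNorm
        rw [Finset.univ_eq_empty, Finset.sup_empty]; rfl
      rw [this] at h; norm_num at h
  | inr hk =>
      obtain ⟨i, -, hi⟩ := Finset.exists_mem_eq_sup (Finset.univ (α := Fin k))
        Finset.univ_nonempty (fun i => Real.toNNReal |2 * (y i : ℝ) - 1|)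
      have hival : |2 * (y i : ℝ) - 1| = 1 := by
        have : cubeNorm y = |2 * (y i : ℝ) - 1| := by
          unfold cubeNorm
          rw [hi, Real.coe_toNNReal _ (abs_nonneg _)]
        rw [this] at h; exact h
      rcases abs_eq (by norm_num : (0:ℝ) ≤ 1) |>.1 hival with h1 | h1
      · exact ⟨i, Or.inr (Subtype.ext (by rw [Set.Icc.coe_one]; linarith))⟩
      · exact ⟨i, Or.inl (Subtype.ext (by rw [Set.Icc.coe_zero]; linarith))⟩

lemma coord_eq_half_of_cubeNorm_eq_zero {y : Fin k → I} (h : cubeNorm y = 0) (i : Fin k) :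
    (y i : ℝ) = 1/2 := by
  have := abs_le_cubeNorm y i
  rw [h] at this
  have := abs_nonpos_iff.1 this
  linarith [this]

/-- radial rescaling of a cube point around the center, clamped. -/
def scaled (y : Fin k → I) (a : ℝ) : Fin k → I :=
  fun i => Set.projIcc (0:ℝ) 1 zero_le_one (1/2 + ((y i : ℝ) - 1/2) * a)

lemma scaled_coe {y : Fin k → I} {a : ℝ} (h0 : 0 ≤ a) (h1 : a * cubeNorm y ≤ 1) (i : Fin k) :
    (scaled y a i : ℝ) = 1/2 + ((y i : ℝ) - 1/2) * a := by
  have hb := abs_le.1 (abs_le_cubeNorm y i)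
  have hu : (2 * (y i : ℝ) - 1) * a ≤ 1 := by
    calc (2 * (y i : ℝ) - 1) * a ≤ cubeNorm y * a :=
          mul_le_mul_of_nonneg_right hb.2 h0
      _ = a * cubeNorm y := mul_comm _ _
      _ ≤ 1 := h1
  have hl : -1 ≤ (2 * (y i : ℝ) - 1) * a := by
    have : -(cubeNorm y) * a ≤ (2 * (y i : ℝ) - 1) * a :=
      mul_le_mul_of_nonneg_right hb.1 h0
    have h2 : -(cubeNorm y) * a = -(a * cubeNorm y) := by ring
    nlinarith
  have hmem : 1/2 + ((y i : ℝ) - 1/2) * a ∈ Set.Icc (0:ℝ) 1 := by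
    constructor <;> nlinarith
  unfold scaled
  rw [Set.projIcc_of_mem _ hmem]

lemma scaled_one (y : Fin k → I) : scaled y 1 = y := by
  funext i
  have := scaled_coe (y := y) (a := 1) zero_le_one (by simpa using cubeNorm_le_one y) i
  apply Subtype.ext
  rw [this]; ring

lemma scaled_scaled {y : Fin k → I} {a b : ℝ} (h0 : 0 ≤ a) (h1 : a * cubeNorm y ≤ 1) :
    scaled (scaled y a) b = scaled y (a * b) := by
  funext i
  show Set.projIcc (0:ℝ) 1 zero_le_one (1/2 + ((scaled y a i : ℝ) - 1/2) * b)
    = Set.projIcc (0:ℝ) 1 zero_le_one (1/2 + ((y i : ℝ) - 1/2) * (a * b))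
  rw [scaled_coe h0 h1 i]
  congr 1
  ring

lemma cubeNorm_scaled {y : Fin k → I} {a : ℝ} (h0 : 0 ≤ a) (h1 : a * cubeNorm y ≤ 1) :
    cubeNorm (scaled y a) = a * cubeNorm y := by
  unfold cubeNorm
  have : ∀ i, Real.toNNReal |2 * (scaled y a i : ℝ) - 1| =
      Real.toNNReal a * Real.toNNReal |2 * (y i : ℝ) - 1| := by
    intro i
    rw [scaled_coe h0 h1 i, show 2 * (1/2 + ((y i : ℝ) - 1/2) * a) - 1
        = a * (2 * (y i : ℝ) - 1) by ring, abs_mul, abs_of_nonneg h0,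
      Real.toNNReal_mul h0]
  simp_rw [this]
  rw [← NNReal.mul_finset_sup]
  rw [NNReal.coe_mul, Real.coe_toNNReal _ h0]

lemma scaled_of_center {y : Fin k → I} (h : cubeNorm y = 0) (a : ℝ) : scaled y a = y := by
  funext i
  apply Subtype.ext
  have hy := coord_eq_half_of_cubeNorm_eq_zero h i
  unfold scaled
  rw [show 1/2 + ((y i : ℝ) - 1/2) * a = 1/2 by rw [hy]; ring]
  rw [Set.projIcc_of_mem _ (by norm_num)]
  exact hy.symm

/-! ### the pair homeomorphism on the cube × interval -/

def gPhi (r t : ℝ) : ℝ := if r = 0 then 2 else phiX r t / r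
def gPsi (r t : ℝ) : ℝ := if r = 0 then 1/2 else psiX r t / r

lemma gPhi_nonneg {r t : ℝ} (hr : 0 ≤ r) (ht : t ≤ 1) : 0 ≤ gPhi r t := by
  unfold gPhi; split_ifs with h
  · norm_num
  · exact div_nonneg (phiX_nonneg hr ht) hr

lemma gPhi_le_two {r t : ℝ} (hr : 0 ≤ r) (ht : 0 ≤ t) : gPhi r t ≤ 2 := by
  unfold gPhi; split_ifs with h
  · norm_num
  · rw [div_le_iff₀ (lt_of_le_of_ne hr (Ne.symm h))]
    exact phiX_le

lemma mul_gPhi {r t : ℝ} (hr : 0 ≤ r) (ht0 : 0 ≤ t) (ht1 : t ≤ 1) :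
    r * gPhi r t = phiX r t := by
  unfold gPhi; split_ifs with h
  · subst h
    rw [show phiX 0 t = 0 from le_antisymm (by simpa using phiX_le (r := 0) (t := t))
      (phiX_nonneg le_rfl ht1)]
    ring
  · rw [mul_div_cancel₀ _ h]

lemma gPsi_nonneg {r t : ℝ} (hr : 0 ≤ r) : 0 ≤ gPsi r t := by
  unfold gPsi; split_ifs with h
  · norm_num
  · exact div_nonneg (psiX_nonneg hr) hr

lemma gPsi_le_two {r t : ℝ} (hr : 0 ≤ r) (ht : t ≤ 1) : gPsi r t ≤ 2 := by
  unfold gPsi; split_ifs with h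
  · norm_num
  · rw [div_le_iff₀ (lt_of_le_of_ne hr (Ne.symm h))]
    unfold psiX
    simp only [max_le_iff]
    exact ⟨by linarith, le_trans (min_le_left _ _) (by linarith)⟩

lemma mul_gPsi {r t : ℝ} (hr : 0 ≤ r) (ht1 : t ≤ 1) :
    r * gPsi r t = psiX r t := by
  unfold gPsi; split_ifs with h
  · subst h
    rw [show psiX 0 t = 0 by
      unfold psiX
      rw [max_eq_left (le_trans (min_le_left _ _) (by linarith))]; ring]
    ring
  · rw [mul_div_cancel₀ _ h]

variable {k : ℕ}

/-- the homeomorphism `I^k × I → I^k × I` carrying the bottom face onto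
bottom ∪ sides. -/
def PhiMap (p : (Fin k → I) × I) : (Fin k → I) × I :=
  (scaled p.1 (gPhi (cubeNorm p.1) p.2),
   Set.projIcc (0:ℝ) 1 zero_le_one (phiT (cubeNorm p.1) p.2))

def PsiMap (p : (Fin k → I) × I) : (Fin k → I) × I :=
  (scaled p.1 (gPsi (cubeNorm p.1) p.2),
   Set.projIcc (0:ℝ) 1 zero_le_one (psiT (cubeNorm p.1) p.2))

lemma phiMap_snd_coe (p : (Fin k → I) × I) :
    ((PhiMap p).2 : ℝ) = phiT (cubeNorm p.1) (p.2 : ℝ) := by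
  show (Set.projIcc (0:ℝ) 1 zero_le_one _ : ℝ) = _
  rw [Set.projIcc_of_mem _ ⟨phiT_nonneg p.2.2.1, phiT_le_one (cubeNorm_le_one _) p.2.2.2⟩]

lemma psiMap_snd_coe (p : (Fin k → I) × I) :
    ((PsiMap p).2 : ℝ) = psiT (cubeNorm p.1) (p.2 : ℝ) := by
  show (Set.projIcc (0:ℝ) 1 zero_le_one _ : ℝ) = _
  rw [Set.projIcc_of_mem _ ⟨psiT_nonneg (cubeNorm_le_one _) p.2.2.1, psiT_le_one p.2.2.2⟩]

lemma gPhi_mul_cubeNorm_le (p : (Fin k → I) × I) :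
    gPhi (cubeNorm p.1) (p.2:ℝ) * cubeNorm p.1 ≤ 1 := by
  rw [mul_comm, mul_gPhi (cubeNorm_nonneg _) p.2.2.1 p.2.2.2]
  exact phiX_le_one p.2.2.1

lemma gPsi_mul_cubeNorm_le (p : (Fin k → I) × I) :
    gPsi (cubeNorm p.1) (p.2:ℝ) * cubeNorm p.1 ≤ 1 := by
  rw [mul_comm, mul_gPsi (cubeNorm_nonneg _) p.2.2.2]
  exact psiX_le_one (cubeNorm_le_one _) p.2.2.2

lemma cubeNorm_phiMap (p : (Fin k → I) × I) :
    cubeNorm (PhiMap p).1 = phiX (cubeNorm p.1) (p.2:ℝ) := by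
  show cubeNorm (scaled _ _) = _
  rw [cubeNorm_scaled (gPhi_nonneg (cubeNorm_nonneg _) p.2.2.2) (gPhi_mul_cubeNorm_le p),
    mul_comm, mul_gPhi (cubeNorm_nonneg _) p.2.2.1 p.2.2.2]

lemma cubeNorm_psiMap (p : (Fin k → I) × I) :
    cubeNorm (PsiMap p).1 = psiX (cubeNorm p.1) (p.2:ℝ) := by
  show cubeNorm (scaled _ _) = _
  rw [cubeNorm_scaled (gPsi_nonneg (cubeNorm_nonneg _)) (gPsi_mul_cubeNorm_le p),
    mul_comm, mul_gPsi (cubeNorm_nonneg _) p.2.2.2]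

lemma psiMap_phiMap (p : (Fin k → I) × I) : PsiMap (PhiMap p) = p := by
  obtain ⟨y, t⟩ := p
  have hr0 := cubeNorm_nonneg y
  have hr1 := cubeNorm_le_one y
  have ht0 : (0:ℝ) ≤ t := t.2.1
  have ht1 : (t:ℝ) ≤ 1 := t.2.2
  refine Prod.ext ?_ ?_
  · show scaled (scaled y (gPhi (cubeNorm y) t)) (gPsi (cubeNorm (PhiMap (y,t)).1)
      ((PhiMap (y,t)).2 : ℝ)) = y
    rw [cubeNorm_phiMap (y,t), phiMap_snd_coe (y,t)]
    rw [scaled_scaled (gPhi_nonneg hr0 ht1) (gPhi_mul_cubeNorm_le (y,t))]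
    rcases eq_or_ne (cubeNorm y) 0 with h0 | h0
    · rw [scaled_of_center h0]
    · have hphi_pos : 0 < phiX (cubeNorm y) t :=
        phiX_pos (lt_of_le_of_ne hr0 (Ne.symm h0)) ht1
      have : gPhi (cubeNorm y) t * gPsi (phiX (cubeNorm y) t) (phiT (cubeNorm y) t) = 1 := by
        unfold gPhi gPsi
        rw [if_neg h0, if_neg (ne_of_gt hphi_pos)]
        rw [psi_phi_X hr0 hr1 ht0 ht1]
        field_simp
      rw [this, scaled_one]
  · show Set.projIcc (0:ℝ) 1 zero_le_one (psiT (cubeNorm (PhiMap (y,t)).1)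
      ((PhiMap (y,t)).2 : ℝ)) = t
    rw [cubeNorm_phiMap (y,t), phiMap_snd_coe (y,t), psi_phi_T hr0 hr1 ht0 ht1]
    exact Subtype.ext (by rw [Set.projIcc_of_mem _ ⟨ht0, ht1⟩])

lemma phiMap_psiMap (p : (Fin k → I) × I) : PhiMap (PsiMap p) = p := by
  obtain ⟨y, t⟩ := p
  have hr0 := cubeNorm_nonneg y
  have hr1 := cubeNorm_le_one y
  have ht0 : (0:ℝ) ≤ t := t.2.1
  have ht1 : (t:ℝ) ≤ 1 := t.2.2
  refine Prod.ext ?_ ?_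
  · show scaled (scaled y (gPsi (cubeNorm y) t)) (gPhi (cubeNorm (PsiMap (y,t)).1)
      ((PsiMap (y,t)).2 : ℝ)) = y
    rw [cubeNorm_psiMap (y,t), psiMap_snd_coe (y,t)]
    rw [scaled_scaled (gPsi_nonneg hr0) (gPsi_mul_cubeNorm_le (y,t))]
    rcases eq_or_ne (cubeNorm y) 0 with h0 | h0
    · rw [scaled_of_center h0]
    · have hpsi_pos : 0 < psiX (cubeNorm y) t :=
        psiX_pos (lt_of_le_of_ne hr0 (Ne.symm h0))
      have : gPsi (cubeNorm y) t * gPhi (psiX (cubeNorm y) t) (psiT (cubeNorm y) t) = 1 := by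
        unfold gPhi gPsi
        rw [if_neg h0, if_neg (ne_of_gt hpsi_pos)]
        rw [phi_psi_X hr0 hr1 ht0 ht1]
        field_simp
      rw [this, scaled_one]
  · show Set.projIcc (0:ℝ) 1 zero_le_one (phiT (cubeNorm (PsiMap (y,t)).1)
      ((PsiMap (y,t)).2 : ℝ)) = t
    rw [cubeNorm_psiMap (y,t), psiMap_snd_coe (y,t), phi_psi_T hr0 hr1 ht0 ht1]
    exact Subtype.ext (by rw [Set.projIcc_of_mem _ ⟨ht0, ht1⟩])

/-! ### continuity of PhiMap and PsiMap -/

lemma continuous_phiX2 : Continuous fun q : ℝ × ℝ => phiX q.1 q.2 := by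
  unfold phiX
  exact (continuous_const.mul continuous_fst).min
    (((continuous_fst.div_const 2).sub ((continuous_const.mul continuous_snd).div_const 4)
      |>.add continuous_const).min
      (continuous_const.sub (continuous_snd.div_const 2)))

lemma continuous_psiX2 : Continuous fun q : ℝ × ℝ => psiX q.1 q.2 := by
  unfold psiX
  exact (continuous_fst.div_const 2).max
    ((((continuous_const.mul continuous_fst).add
      ((continuous_const.mul continuous_snd).div_const 2)).sub continuous_const).min
      ((continuous_snd.add continuous_const).div_const 2))

section maps

variable {k : ℕ}

private lemma hcm : Continuous fun p : (Fin k → I) × I => cubeNorm p.1 :=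
  continuous_cubeNorm.comp continuous_fst

private lemma hct : Continuous fun p : (Fin k → I) × I => (p.2 : ℝ) :=
  continuous_subtype_val.comp continuous_snd

private lemma hcy (i : Fin k) : Continuous fun p : (Fin k → I) × I => ((p.1 i : ℝ) - 1/2) :=
  (continuous_subtype_val.comp ((continuous_apply i).comp continuous_fst)).sub continuous_const

lemma abs_coord_le {y : Fin k → I} (i : Fin k) : |(y i : ℝ) - 1/2| ≤ cubeNorm y / 2 := by
  have := abs_le_cubeNorm y i
  rw [show (2:ℝ) * (y i : ℝ) - 1 = 2 * ((y i : ℝ) - 1/2) by ring, abs_mul] at this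
  rw [abs_of_nonneg (by norm_num : (0:ℝ) ≤ 2)] at this
  linarith

lemma continuous_coordPhi (i : Fin k) :
    Continuous fun p : (Fin k → I) × I =>
      ((p.1 i : ℝ) - 1/2) * gPhi (cubeNorm p.1) (p.2 : ℝ) := by
  rw [continuous_iff_continuousAt]
  intro p0
  rcases eq_or_ne (cubeNorm p0.1) 0 with h0 | h0
  · rcases lt_or_eq_of_le (p0.2.2.2 : (p0.2 : ℝ) ≤ 1) with h1 | h1
    · -- t0 < 1 : gPhi is eventually the constant 2
      have hopen : IsOpen {p : (Fin k → I) × I | 2 * cubeNorm p.1 + (p.2 : ℝ) < 1} :=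
        isOpen_lt ((continuous_const.mul hcm).add hct) continuous_const
      have hmem : p0 ∈ {p : (Fin k → I) × I | 2 * cubeNorm p.1 + (p.2 : ℝ) < 1} := by
        simp only [Set.mem_setOf_eq, h0]; linarith
      refine ContinuousAt.congr (f := fun p : (Fin k → I) × I =>
        ((p.1 i : ℝ) - 1/2) * 2) (((hcy i).mul continuous_const).continuousAt) ?_
      filter_upwards [hopen.mem_nhds hmem] with p hp
      have : gPhi (cubeNorm p.1) (p.2 : ℝ) = 2 := by
        unfold gPhi
        split_ifs with h
        · rfl
        · rw [phiX_eqA (by exact le_of_lt (by simpa using hp)) p.2.2.1]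
          field_simp
      rw [this]
    · -- t0 = 1, cubeNorm p0.1 = 0 : squeeze
      have hval : ((p0.1 i : ℝ) - 1/2) * gPhi (cubeNorm p0.1) (p0.2 : ℝ) = 0 := by
        rw [coord_eq_half_of_cubeNorm_eq_zero h0 i]; ring
      unfold ContinuousAt
      have hval2 : (fun p : (Fin k → I) × I =>
          ((p.1 i : ℝ) - 1/2) * gPhi (cubeNorm p.1) (p.2 : ℝ)) p0 = 0 := hval
      rw [hval2]
      refine squeeze_zero_norm (a := fun p : (Fin k → I) × I => cubeNorm p.1)
        (fun p => ?_) (by have := hcm.tendsto p0; rwa [h0] at this)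
      · rw [Real.norm_eq_abs, abs_mul]
        calc |(p.1 i : ℝ) - 1/2| * |gPhi (cubeNorm p.1) (p.2:ℝ)|
            ≤ (cubeNorm p.1 / 2) * 2 := by
              apply mul_le_mul (abs_coord_le i) ?_ (abs_nonneg _)
                (by linarith [cubeNorm_nonneg p.1])
              rw [abs_of_nonneg (gPhi_nonneg (cubeNorm_nonneg _) p.2.2.2)]
              exact gPhi_le_two (cubeNorm_nonneg _) p.2.2.1
          _ = cubeNorm p.1 := by ring
  · -- cubeNorm p0.1 ≠ 0
    have hopen : IsOpen {p : (Fin k → I) × I | cubeNorm p.1 ≠ 0} :=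
      isOpen_compl_singleton.preimage hcm
    refine ContinuousAt.congr (f := fun p : (Fin k → I) × I =>
      ((p.1 i : ℝ) - 1/2) * (phiX (cubeNorm p.1) (p.2:ℝ) / cubeNorm p.1)) ?_ ?_
    · exact ((hcy i).continuousAt).mul
        (((continuous_phiX2.comp (hcm.prodMk hct)).continuousAt).div hcm.continuousAt h0)
    · filter_upwards [hopen.mem_nhds h0] with p hp
      unfold gPhi
      rw [if_neg hp]

lemma continuous_coordPsi (i : Fin k) :
    Continuous fun p : (Fin k → I) × I =>
      ((p.1 i : ℝ) - 1/2) * gPsi (cubeNorm p.1) (p.2 : ℝ) := by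
  rw [continuous_iff_continuousAt]
  intro p0
  rcases eq_or_ne (cubeNorm p0.1) 0 with h0 | h0
  · rcases lt_or_eq_of_le (p0.2.2.2 : (p0.2 : ℝ) ≤ 1) with h1 | h1
    · have hopen : IsOpen {p : (Fin k → I) × I | cubeNorm p.1 + (p.2 : ℝ) < 1} :=
        isOpen_lt (hcm.add hct) continuous_const
      have hmem : p0 ∈ {p : (Fin k → I) × I | cubeNorm p.1 + (p.2 : ℝ) < 1} := by
        simp only [Set.mem_setOf_eq, h0]; linarith
      refine ContinuousAt.congr (f := fun p : (Fin k → I) × I =>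
        ((p.1 i : ℝ) - 1/2) * (1/2)) (((hcy i).mul continuous_const).continuousAt) ?_
      filter_upwards [hopen.mem_nhds hmem] with p hp
      have : gPsi (cubeNorm p.1) (p.2 : ℝ) = 1/2 := by
        unfold gPsi
        split_ifs with h
        · rfl
        · rw [psiX_eqA (by exact le_of_lt (by simpa using hp))]
          field_simp
      rw [this]
    · have hval : ((p0.1 i : ℝ) - 1/2) * gPsi (cubeNorm p0.1) (p0.2 : ℝ) = 0 := by
        rw [coord_eq_half_of_cubeNorm_eq_zero h0 i]; ring
      unfold ContinuousAt
      have hval2 : (fun p : (Fin k → I) × I =>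
          ((p.1 i : ℝ) - 1/2) * gPsi (cubeNorm p.1) (p.2 : ℝ)) p0 = 0 := hval
      rw [hval2]
      refine squeeze_zero_norm (a := fun p : (Fin k → I) × I => cubeNorm p.1)
        (fun p => ?_) (by have := hcm.tendsto p0; rwa [h0] at this)
      · rw [Real.norm_eq_abs, abs_mul]
        calc |(p.1 i : ℝ) - 1/2| * |gPsi (cubeNorm p.1) (p.2:ℝ)|
            ≤ (cubeNorm p.1 / 2) * 2 := by
              apply mul_le_mul (abs_coord_le i) ?_ (abs_nonneg _)
                (by linarith [cubeNorm_nonneg p.1])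
              rw [abs_of_nonneg (gPsi_nonneg (cubeNorm_nonneg _))]
              exact gPsi_le_two (cubeNorm_nonneg _) p.2.2.2
          _ = cubeNorm p.1 := by ring
  · have hopen : IsOpen {p : (Fin k → I) × I | cubeNorm p.1 ≠ 0} :=
      isOpen_compl_singleton.preimage hcm
    refine ContinuousAt.congr (f := fun p : (Fin k → I) × I =>
      ((p.1 i : ℝ) - 1/2) * (psiX (cubeNorm p.1) (p.2:ℝ) / cubeNorm p.1)) ?_ ?_
    · exact ((hcy i).continuousAt).mul
        (((continuous_psiX2.comp (hcm.prodMk hct)).continuousAt).div hcm.continuousAt h0)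
    · filter_upwards [hopen.mem_nhds h0] with p hp
      unfold gPsi
      rw [if_neg hp]

lemma continuous_phiMap : Continuous (PhiMap (k := k)) := by
  unfold PhiMap
  apply Continuous.prodMk
  · apply continuous_pi
    intro i
    exact continuous_projIcc.comp (continuous_const.add (continuous_coordPhi i))
  · apply continuous_projIcc.comp
    unfold phiT
    exact hct.max ((continuous_const.mul hcm).sub continuous_const)

lemma continuous_psiMap : Continuous (PsiMap (k := k)) := by
  unfold PsiMap
  apply Continuous.prodMk
  · apply continuous_pi
    intro i
    exact continuous_projIcc.comp (continuous_const.add (continuous_coordPsi i))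
  · apply continuous_projIcc.comp
    unfold psiT
    exact hct.min (continuous_const.sub (continuous_const.mul hcm))

end maps


/-! ### slice computations -/

lemma coeI_zero : (((0:I)) : ℝ) = 0 := rfl
lemma coeI_one : (((1:I)) : ℝ) = 1 := rfl

lemma projIcc_eqI_zero {x : ℝ} (hx : x = 0) :
    Set.projIcc (0:ℝ) 1 zero_le_one x = (0:I) := by
  subst hx
  refine Subtype.ext ?_
  rw [Set.projIcc_of_mem _ (by norm_num : (0:ℝ) ∈ Set.Icc (0:ℝ) 1)]
  rfl


lemma gPhi_zero {r : ℝ} (hr0 : 0 ≤ r) (hr1 : r ≤ 1) : gPhi r 0 = (max r (1/2))⁻¹ := by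
  unfold gPhi
  split_ifs with h
  · subst h
    rw [max_eq_right (by norm_num)]
    norm_num
  · rw [phiX_zero hr0 hr1]
    rcases le_total r (1/2) with h2 | h2
    · rw [min_eq_left (by linarith), max_eq_right h2]
      field_simp
    · rw [min_eq_right (by linarith), max_eq_left h2, one_div]

lemma gPsi_zero {r : ℝ} (hr0 : 0 ≤ r) (hr1 : r ≤ 1) : gPsi r 0 = 1/2 := by
  unfold gPsi
  split_ifs with h
  · rfl
  · rw [psiX_zero hr0 hr1]
    field_simp

/-! ### the relative homotopy lifting property of Serre fibrations -/

variable {Eo Bo : Type*} [TopologicalSpace Eo] [TopologicalSpace Bo]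

theorem serre_relative {p : C(Eo, Bo)} (hp : _root_.IsSerreFibration p) (k : ℕ)
    (H : C((Fin k → I) × I, Bo)) (h : C(Fin k → I, Eo))
    (hinit : ∀ y, p (h y) = H (y, 0))
    (hbdry : ∀ y ∈ Cube.boundary (Fin k), ∀ t, H (y, t) = H (y, 0)) :
    ∃ G : C((Fin k → I) × I, Eo), (∀ z, p (G z) = H z) ∧ (∀ y, G (y, 0) = h y) ∧
      ∀ y ∈ Cube.boundary (Fin k), ∀ t, G (y, t) = h y := by
  classical
  set Φ : C((Fin k → I) × I, (Fin k → I) × I) := ⟨PhiMap, continuous_phiMap⟩ with hΦ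
  set Ψ : C((Fin k → I) × I, (Fin k → I) × I) := ⟨PsiMap, continuous_psiMap⟩ with hΨ
  have contd : Continuous fun y : Fin k → I => (PhiMap (y, (0:I))).1 :=
    continuous_fst.comp (continuous_phiMap.comp (continuous_id.prodMk continuous_const))
  set d : C(Fin k → I, Fin k → I) := ⟨fun y => (PhiMap (y, (0:I))).1, contd⟩ with hd
  -- the shifted initial condition
  have hinit' : ∀ z, p ((h.comp d) z) = (H.comp Φ) (z, 0) := by
    intro z
    have hm0 := cubeNorm_nonneg z
    have hm1 := cubeNorm_le_one z
    show p (h (d z)) = H (PhiMap (z, 0))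
    have hsnd : ((PhiMap (z, (0:I))).2 : ℝ) = max 0 (2 * cubeNorm z - 1) := by
      rw [phiMap_snd_coe (z, 0)]
      rfl
    rcases le_total (cubeNorm z) (1/2) with hc | hc
    · -- the time coordinate is 0
      have h2 : (PhiMap (z, (0:I))).2 = (0:I) := by
        apply Subtype.ext
        rw [hsnd, coeI_zero, max_eq_left (by linarith)]
      have : PhiMap (z, (0:I)) = (d z, (0:I)) := by
        calc PhiMap (z, (0:I)) = (d z, (PhiMap (z, (0:I))).2) := rfl
          _ = (d z, (0:I)) := by rw [h2]
      rw [this]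
      exact hinit (d z)
    · -- the space coordinate is on the boundary
      have hb : (d z) ∈ Cube.boundary (Fin k) := by
        apply boundary_of_cubeNorm_eq_one
        show cubeNorm (PhiMap (z, (0:I))).1 = 1
        rw [cubeNorm_phiMap (z, 0), coeI_zero, phiX_zero hm0 hm1,
          min_eq_right (by linarith)]
      have : PhiMap (z, (0:I)) = (d z, (PhiMap (z, (0:I))).2) := rfl
      rw [this, hbdry (d z) hb ((PhiMap (z, (0:I))).2), hinit (d z)]
  obtain ⟨G', hG'1, hG'2⟩ := hp k (H.comp Φ) (h.comp d) hinit'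
  refine ⟨G'.comp Ψ, ?_, ?_, ?_⟩
  · intro w
    show p (G' (PsiMap w)) = H w
    rw [hG'1 (PsiMap w)]
    show H (PhiMap (PsiMap w)) = H w
    rw [phiMap_psiMap w]
  · intro y
    have hm0 := cubeNorm_nonneg y
    have hm1 := cubeNorm_le_one y
    show G' (PsiMap (y, (0:I))) = h y
    have h1 : (PsiMap (y, (0:I))) = (scaled y (1/2), (0:I)) := by
      refine Prod.ext ?_ ?_
      · show scaled y (gPsi (cubeNorm y) ((0:I):ℝ)) = scaled y (1/2)
        rw [coeI_zero, gPsi_zero hm0 hm1]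
      · apply Subtype.ext
        rw [psiMap_snd_coe (y, 0), coeI_zero, psiT_zero hm1]
    rw [h1, hG'2 (scaled y (1/2))]
    show h (d (scaled y (1/2))) = h y
    congr 1
    show scaled (scaled y (1/2)) (gPhi (cubeNorm (scaled y (1/2))) ((0:I):ℝ)) = y
    have hs : cubeNorm (scaled y (1/2)) = (1/2) * cubeNorm y :=
      cubeNorm_scaled (by norm_num) (by linarith)
    rw [coeI_zero, hs, gPhi_zero (by linarith) (by linarith),
      max_eq_right (by linarith), scaled_scaled (by norm_num) (by linarith)]
    rw [show (1/2 : ℝ) * (1/2)⁻¹ = 1 by norm_num, scaled_one]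
  · intro y hy t
    have hm : cubeNorm y = 1 := cubeNorm_eq_one_of_boundary hy
    have ht0 : (0:ℝ) ≤ t := t.2.1
    have ht1 : (t:ℝ) ≤ 1 := t.2.2
    show G' (PsiMap (y, t)) = h y
    have h1 : (PsiMap (y, t)) = (scaled y (((t:ℝ)+1)/2), (0:I)) := by
      refine Prod.ext ?_ ?_
      · show scaled y (gPsi (cubeNorm y) (t:ℝ)) = scaled y (((t:ℝ)+1)/2)
        rw [hm]
        congr 1
        unfold gPsi
        rw [if_neg one_ne_zero, psiX_one' ht0 ht1, div_one]
      · apply Subtype.ext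
        rw [psiMap_snd_coe (y, t), hm, psiT_one' ht0, coeI_zero]
    rw [h1, hG'2 _]
    show h (d (scaled y (((t:ℝ)+1)/2))) = h y
    congr 1
    show scaled (scaled y (((t:ℝ)+1)/2)) (gPhi (cubeNorm (scaled y (((t:ℝ)+1)/2))) ((0:I):ℝ)) = y
    have hs : cubeNorm (scaled y (((t:ℝ)+1)/2)) = ((t:ℝ)+1)/2 * cubeNorm y :=
      cubeNorm_scaled (by linarith) (by rw [hm]; linarith)
    rw [coeI_zero, hs, hm, mul_one, gPhi_zero (by linarith) (by linarith),
      max_eq_left (by linarith), scaled_scaled (by linarith) (by rw [hm]; linarith)]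
    rw [mul_inv_cancel₀ (by linarith : ((t:ℝ)+1)/2 ≠ 0), scaled_one]

/-! ### induced maps on generalized loops, and the path dictionary -/

section dict

variable {N : Type*} {Z W : Type*} [TopologicalSpace Z] [TopologicalSpace W]

/-- `GenLoop.induced` with a flexible base point. -/
def inducedAt (g : C(Z, W)) {z0 : Z} {w0 : W} (hg : g z0 = w0) (u : Ω^ N Z z0) :
    Ω^ N W w0 :=
  ⟨g.comp u.1, fun y hy => by
    show g (u y) = w0
    rw [GenLoop.boundary u y hy, hg]⟩

@[simp] lemma inducedAt_apply (g : C(Z, W)) {z0 : Z} {w0 : W} (hg : g z0 = w0)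
    (u : Ω^ N Z z0) (y : (N → I)) : inducedAt g hg u y = g (u y) := rfl

lemma continuous_inducedAt (g : C(Z, W)) {z0 : Z} {w0 : W} (hg : g z0 = w0) :
    Continuous (inducedAt (N := N) g hg) :=
  (((ContinuousMap.continuous_postcomp g)).comp continuous_subtype_val).subtype_mk _

lemma inducedAt_const (g : C(Z, W)) {z0 : Z} {w0 : W} (hg : g z0 = w0) :
    inducedAt (N := N) g hg GenLoop.const = GenLoop.const :=
  GenLoop.ext _ _ fun _ => hg

lemma inducedAt_homotopic (g : C(Z, W)) {z0 : Z} {w0 : W} (hg : g z0 = w0)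
    {u v : Ω^ N Z z0} (h : GenLoop.Homotopic u v) :
    GenLoop.Homotopic (inducedAt g hg u) (inducedAt g hg v) :=
  Nonempty.map (fun F => F.compContinuousMap g) h

lemma inducedAt_transAt [DecidableEq N] (g : C(Z, W)) {z0 : Z} {w0 : W} (hg : g z0 = w0)
    (i : N) (u v : Ω^ N Z z0) :
    inducedAt g hg (GenLoop.transAt i u v) =
      GenLoop.transAt i (inducedAt g hg u) (inducedAt g hg v) := by
  apply GenLoop.ext
  intro y
  show g (GenLoop.transAt i u v y) = GenLoop.transAt i _ _ y
  simp only [GenLoop.transAt, GenLoop.coe_copy]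
  split_ifs <;> rfl

/-- homotopic rel boundary implies joined in the loop space -/
lemma joined_of_homotopic {z0 : Z} {u v : Ω^ N Z z0} (h : GenLoop.Homotopic u v) :
    Joined u v := by
  obtain ⟨F⟩ := h
  refine ⟨⟨⟨fun t => ⟨F.toContinuousMap.curry t, fun y hy => ?_⟩, ?_⟩, ?_, ?_⟩⟩
  · show F (t, y) = z0
    rw [F.eq_fst t hy]
    exact GenLoop.boundary u y hy
  · exact (F.toContinuousMap.curry.continuous).subtype_mk _
  · apply GenLoop.ext
    intro y
    exact F.apply_zero y
  · apply GenLoop.ext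
    intro y
    exact F.apply_one y

lemma homotopic_of_joined {z0 : Z} {u v : Ω^ N Z z0} (h : Joined u v) :
    GenLoop.Homotopic u v := by
  obtain ⟨γ⟩ := h
  refine ⟨{ toFun := fun q => γ q.1 q.2
            continuous_toFun := ?_
            map_zero_left := fun y => ?_
            map_one_left := fun y => ?_
            prop' := fun t y hy => ?_ }⟩
  · exact continuous_eval.comp ((γ.continuous.comp continuous_fst).prodMk continuous_snd)
  · show γ 0 y = u y
    rw [γ.source]
  · show γ 1 y = v y
    rw [γ.target]
  · show γ t y = u y
    rw [GenLoop.boundary (γ t) y hy, GenLoop.boundary u y hy]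

lemma homotopic_iff_joined {z0 : Z} (u v : Ω^ N Z z0) :
    GenLoop.Homotopic u v ↔ Joined u v :=
  ⟨joined_of_homotopic, homotopic_of_joined⟩

end dict

/-! ### the cube splitting homeomorphism `I^k × I ≃ I^(k+1)` -/

def cubeSucc {k : ℕ} : ((Fin k → I) × I) ≃ₜ (Fin (k+1) → I) where
  toFun p := Fin.snoc p.1 p.2
  invFun z := (fun i => z i.castSucc, z (Fin.last k))
  left_inv p := by
    refine Prod.ext (funext fun i => ?_) ?_ <;> simp
  right_inv z := by
    funext j
    induction j using Fin.lastCases with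
    | last => simp
    | cast i => simp
  continuous_toFun := by
    apply continuous_pi
    intro j
    induction j using Fin.lastCases with
    | last => simpa only [Fin.snoc_last] using
        (continuous_snd : Continuous fun p : (Fin k → I) × I => p.2)
    | cast i => simpa only [Fin.snoc_castSucc, Function.comp_def] using
        ((continuous_apply i).comp (continuous_fst : Continuous fun p : (Fin k → I) × I => p.1))
  continuous_invFun :=
    (continuous_pi fun i => continuous_apply _).prodMk (continuous_apply _)

lemma cubeSucc_mem_boundary_iff {k : ℕ} (p : (Fin k → I) × I) :
    (cubeSucc p : Fin (k+1) → I) ∈ Cube.boundary (Fin (k+1)) ↔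
      (p.1 ∈ Cube.boundary (Fin k) ∨ p.2 = 0 ∨ p.2 = 1) := by
  have hc : (cubeSucc p : Fin (k+1) → I) = Fin.snoc p.1 p.2 := rfl
  rw [hc]
  constructor
  · rintro ⟨j, hj⟩
    induction j using Fin.lastCases with
    | last =>
        right
        rwa [Fin.snoc_last] at hj
    | cast i =>
        left
        refine ⟨i, ?_⟩
        rwa [Fin.snoc_castSucc] at hj
  · rintro (⟨i, hi⟩ | h)
    · exact ⟨i.castSucc, by rwa [Fin.snoc_castSucc]⟩
    · exact ⟨Fin.last k, by rwa [Fin.snoc_last]⟩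

/-! ### product form of the relative lifting lemma -/

variable {Eo Bo : Type*} [TopologicalSpace Eo] [TopologicalSpace Bo]

theorem serre_relative_prod {p : C(Eo, Bo)} (hp : _root_.IsSerreFibration p) (k : ℕ)
    (H : C(((Fin k → I) × I) × I, Bo)) (h : C((Fin k → I) × I, Eo))
    (hinit : ∀ z, p (h z) = H (z, 0))
    (hbdry : ∀ z : (Fin k → I) × I, (z.1 ∈ Cube.boundary (Fin k) ∨ z.2 = 0 ∨ z.2 = 1) →
      ∀ s, H (z, s) = H (z, 0)) :
    ∃ G : C(((Fin k → I) × I) × I, Eo), (∀ w, p (G w) = H w) ∧ (∀ z, G (z, 0) = h z) ∧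
      ∀ z : (Fin k → I) × I, (z.1 ∈ Cube.boundary (Fin k) ∨ z.2 = 0 ∨ z.2 = 1) →
        ∀ s, G (z, s) = h z := by
  classical
  set e : ((Fin k → I) × I) ≃ₜ (Fin (k+1) → I) := cubeSucc with he
  set H' : C((Fin (k+1) → I) × I, Bo) :=
    H.comp ((ContinuousMap.mk e.symm e.symm.continuous).prodMap (ContinuousMap.id I)) with hH'
  set h' : C(Fin (k+1) → I, Eo) := h.comp (ContinuousMap.mk e.symm e.symm.continuous) with hh'
  have hinit' : ∀ y, p (h' y) = H' (y, 0) := fun y => hinit (e.symm y)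
  have hbdry' : ∀ y ∈ Cube.boundary (Fin (k+1)), ∀ t, H' (y, t) = H' (y, 0) := by
    intro y hy t
    show H (e.symm y, t) = H (e.symm y, 0)
    apply hbdry
    rw [← cubeSucc_mem_boundary_iff (e.symm y)]
    show (e (e.symm y) : Fin (k+1) → I) ∈ _
    rwa [e.apply_symm_apply]
  obtain ⟨G', hG'1, hG'2, hG'3⟩ := serre_relative hp (k+1) H' h' hinit' hbdry'
  refine ⟨G'.comp ((ContinuousMap.mk e e.continuous).prodMap (ContinuousMap.id I)), ?_, ?_, ?_⟩
  · intro w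
    show p (G' (e w.1, w.2)) = H w
    rw [hG'1 (e w.1, w.2)]
    show H (e.symm (e w.1), w.2) = H w
    rw [e.symm_apply_apply]
  · intro z
    show G' (e z, 0) = h z
    rw [hG'2 (e z)]
    show h (e.symm (e z)) = h z
    rw [e.symm_apply_apply]
  · intro z hz s
    show G' (e z, s) = h z
    have hb : (e z : Fin (k+1) → I) ∈ Cube.boundary (Fin (k+1)) :=
      (cubeSucc_mem_boundary_iff z).2 hz
    rw [hG'3 (e z) hb s]
    show h (e.symm (e z)) = h z
    rw [e.symm_apply_apply]

/-! ### mapping paths with endpoint correction -/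

section pmap

variable {A B' : Type*} [TopologicalSpace A] [TopologicalSpace B']

/-- `Path.map` with endpoint adjustment. -/
def pmap {a b : A} (γ : Path a b) (g : A → B') (hg : Continuous g) {a' b' : B'}
    (ha : g a = a') (hb : g b = b') : Path a' b' where
  toFun t := g (γ t)
  continuous_toFun := hg.comp γ.continuous
  source' := by show g (γ 0) = a'; rw [γ.source]; exact ha
  target' := by show g (γ 1) = b'; rw [γ.target]; exact hb

@[simp] lemma pmap_apply {a b : A} (γ : Path a b) (g : A → B') (hg : Continuous g)
    {a' b' : B'} (ha : g a = a') (hb : g b = b') (t : I) :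
    pmap γ g hg ha hb t = g (γ t) := rfl

lemma pmap_homotopic {a b : A} {γ δ : Path a b} (h : Path.Homotopic γ δ)
    (g : A → B') (hg : Continuous g) {a' b' : B'} (ha : g a = a') (hb : g b = b') :
    Path.Homotopic (pmap γ g hg ha hb) (pmap δ g hg ha hb) := by
  obtain ⟨F⟩ := h
  refine ⟨{ toFun := fun q => g (F q)
            continuous_toFun := hg.comp F.continuous
            map_zero_left := fun t => by
              show g (F (0, t)) = _
              rw [F.apply_zero]
              rfl
            map_one_left := fun t => by
              show g (F (1, t)) = _
              rw [F.apply_one]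
              rfl
            prop' := fun s t ht => by
              show g (F (s, t)) = _
              rw [F.eq_fst s ht]
              rfl }⟩

lemma pmap_trans {a b c : A} (γ : Path a b) (δ : Path b c) (g : A → B') (hg : Continuous g)
    {a' b' c' : B'} (ha : g a = a') (hb : g b = b') (hc : g c = c') :
    pmap (γ.trans δ) g hg ha hc = (pmap γ g hg ha hb).trans (pmap δ g hg hb hc) := by
  apply Path.ext; funext t
  show g ((γ.trans δ) t) = ((pmap γ g hg ha hb).trans (pmap δ g hg hb hc)) t
  rw [Path.trans_apply, Path.trans_apply]
  split_ifs <;> rfl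

lemma pmap_symm {a b : A} (γ : Path a b) (g : A → B') (hg : Continuous g)
    {a' b' : B'} (ha : g a = a') (hb : g b = b') :
    pmap γ.symm g hg hb ha = (pmap γ g hg ha hb).symm := by
  apply Path.ext; funext t
  rfl

lemma pmap_pmap {C' : Type*} [TopologicalSpace C'] {a b : A} (γ : Path a b)
    (g : A → B') (hg : Continuous g) (g' : B' → C') (hg' : Continuous g')
    {a' b' : B'} (ha : g a = a') (hb : g b = b')
    {a'' b'' : C'} (ha' : g' a' = a'') (hb' : g' b' = b'') :
    pmap (pmap γ g hg ha hb) g' hg' ha' hb' =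
      pmap γ (g' ∘ g) (hg'.comp hg) (by show g' (g a) = a''; rw [ha, ha'])
        (by show g' (g b) = b''; rw [hb, hb']) := by
  apply Path.ext; funext t
  rfl

lemma pmap_id {a b : A} (γ : Path a b) : pmap γ id continuous_id rfl rfl = γ := by
  apply Path.ext; funext t; rfl

end pmap

/-! ### reindexing generalized loops -/

section congrGL

variable {M N : Type*} (e : M ≃ N) {Z W : Type*} [TopologicalSpace Z] [TopologicalSpace W]
variable {z0 : Z} {w0 : W}

/-- reindexing a generalized loop along an equivalence of index types. -/
def glCongr (u : Ω^ N Z z0) : Ω^ M Z z0 :=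
  ⟨u.1.comp ⟨fun y j => y (e.symm j), by
      exact continuous_pi fun j => continuous_apply _⟩,
    fun y ⟨i, hi⟩ => by
      show u (fun j => y (e.symm j)) = z0
      apply GenLoop.boundary u
      refine ⟨e i, ?_⟩
      show y (e.symm (e i)) = 0 ∨ y (e.symm (e i)) = 1
      rw [e.symm_apply_apply]
      exact hi⟩

@[simp] lemma glCongr_apply (u : Ω^ N Z z0) (y : M → I) :
    glCongr e u y = u (fun j => y (e.symm j)) := rfl

lemma continuous_glCongr : Continuous (glCongr (Z := Z) (z0 := z0) e) :=
  ((ContinuousMap.continuous_precomp _).comp continuous_subtype_val).subtype_mk _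

lemma glCongr_const : glCongr e (GenLoop.const : Ω^ N Z z0) = GenLoop.const :=
  GenLoop.ext _ _ fun _ => rfl

lemma glCongr_symm_glCongr (u : Ω^ N Z z0) : glCongr e.symm (glCongr e u) = u := by
  apply GenLoop.ext
  intro y
  show u (fun j => (fun i => y (e.symm.symm i)) (e.symm j)) = u y
  exact congrArg _ (funext fun j => by simp)

lemma glCongr_inducedAt (g : C(Z, W)) (hg : g z0 = w0) (u : Ω^ N Z z0) :
    glCongr e (inducedAt g hg u) = inducedAt g hg (glCongr e u) :=
  GenLoop.ext _ _ fun _ => rfl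

lemma glCongr_homotopic {u v : Ω^ N Z z0} (h : GenLoop.Homotopic u v) :
    GenLoop.Homotopic (glCongr e u) (glCongr e v) := by
  apply homotopic_of_joined
  obtain ⟨γ⟩ := joined_of_homotopic h
  exact ⟨pmap γ (glCongr e) (continuous_glCongr e) rfl rfl⟩

end congrGL

/-- the equivalence `{j : Fin (m+2) // j ≠ 0} ≃ Fin (m+1)`. -/
def finSuccNe (m : ℕ) : {j : Fin (m+2) // j ≠ 0} ≃ Fin (m+1) where
  toFun j := Fin.pred j.1 j.2
  invFun i := ⟨i.succ, Fin.succ_ne_zero i⟩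
  left_inv j := Subtype.ext (Fin.succ_pred j.1 j.2)
  right_inv i := Fin.pred_succ _

/-! ### surjectivity on based loops of loop spaces -/

section surjloop

variable {Xs Bs : Type*} [TopologicalSpace Xs] [TopologicalSpace Bs]

lemma genLoop_induced_eq_inducedAt {N : Type*} (f : C(Xs, Bs)) {x0 : Xs} (u : Ω^ N Xs x0) :
    GenLoop.induced f u = inducedAt f rfl u := rfl

theorem surjective_loops (f : C(Xs, Bs)) (x0 : Xs) {m : ℕ}
    (hs : Function.Surjective (HomotopyGroup.induced (Fin (m+2)) f x0))
    (W : Path (GenLoop.const : Ω^ (Fin (m+1)) Bs (f x0)) GenLoop.const) :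
    ∃ C : Path (GenLoop.const : Ω^ (Fin (m+1)) Xs x0) GenLoop.const,
      Path.Homotopic
        (pmap C (inducedAt f rfl) (continuous_inducedAt f rfl)
          (inducedAt_const f rfl) (inducedAt_const f rfl)) W := by
  classical
  set E := finSuccNe m with hE
  -- move `W` to the subtype-indexed loop space
  set W' : Path (GenLoop.const : Ω^ {j : Fin (m+2) // j ≠ 0} Bs (f x0)) GenLoop.const :=
    pmap W (glCongr (Z := Bs) (z0 := f x0) E) (continuous_glCongr E) (glCongr_const E) (glCongr_const E) with hW'
  set w : Ω^ (Fin (m+2)) Bs (f x0) := GenLoop.fromLoop 0 W' with hw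
  obtain ⟨uq, huq⟩ := hs ⟦w⟧
  obtain ⟨u, rfl⟩ := uq.exists_rep
  have hH : GenLoop.Homotopic (inducedAt f rfl u) w := by
    rw [← genLoop_induced_eq_inducedAt]
    exact Quotient.exact huq
  have P0 : Path.Homotopic (GenLoop.toLoop 0 (inducedAt f rfl u)) (GenLoop.toLoop 0 w) :=
    GenLoop.homotopicTo 0 hH
  rw [hw, GenLoop.to_from] at P0
  have hcomm : GenLoop.toLoop 0 (inducedAt f rfl u) =
      pmap (GenLoop.toLoop 0 u) (inducedAt f rfl) (continuous_inducedAt f rfl)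
        (inducedAt_const f rfl) (inducedAt_const f rfl) := by
    apply Path.ext; funext t
    exact GenLoop.ext _ _ fun y => rfl
  rw [hcomm] at P0
  -- map everything back along `glCongr E.symm`
  refine ⟨pmap (GenLoop.toLoop 0 u) (fun v => glCongr E.symm v)
    (continuous_glCongr E.symm) (glCongr_const E.symm) (glCongr_const E.symm), ?_⟩
  have P1 := pmap_homotopic P0 (glCongr E.symm) (continuous_glCongr E.symm)
    (glCongr_const E.symm) (glCongr_const E.symm)
  have e1 : pmap (pmap (GenLoop.toLoop 0 u) (inducedAt f rfl) (continuous_inducedAt f rfl)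
        (inducedAt_const f rfl) (inducedAt_const f rfl)) (glCongr E.symm)
        (continuous_glCongr E.symm) (glCongr_const E.symm) (glCongr_const E.symm) =
      pmap (pmap (GenLoop.toLoop 0 u) (fun v => glCongr E.symm v)
        (continuous_glCongr E.symm) (glCongr_const E.symm) (glCongr_const E.symm))
        (inducedAt f rfl) (continuous_inducedAt f rfl)
        (inducedAt_const f rfl) (inducedAt_const f rfl) := by
    apply Path.ext; funext t
    show glCongr E.symm (inducedAt f rfl (GenLoop.toLoop 0 u t)) =
      inducedAt f rfl (glCongr E.symm (GenLoop.toLoop 0 u t))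
    rw [glCongr_inducedAt]
  have e2 : pmap W' (glCongr E.symm) (continuous_glCongr E.symm)
      (glCongr_const E.symm) (glCongr_const E.symm) = W := by
    apply Path.ext; funext t
    show glCongr E.symm (glCongr E (W t)) = W t
    rw [glCongr_symm_glCongr]
  rw [e1, e2] at P1
  exact P1

end surjloop

/-! ### the 1-dimensional dictionary and π₀ lemmas -/

section dim1

variable {Z W : Type*} [TopologicalSpace Z] [TopologicalSpace W]

/-- a plain loop from a 1-dimensional generalized loop -/
def toPath1 {z0 : Z} (u : Ω^ (Fin 1) Z z0) : Path z0 z0 where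
  toFun t := u (fun _ => t)
  continuous_toFun := u.1.continuous.comp (continuous_pi fun _ => continuous_id)
  source' := GenLoop.boundary u _ ⟨0, Or.inl rfl⟩
  target' := GenLoop.boundary u _ ⟨0, Or.inr rfl⟩

/-- a 1-dimensional generalized loop from a plain loop -/
def ofPath1 {z0 : Z} (γ : Path z0 z0) : Ω^ (Fin 1) Z z0 :=
  ⟨⟨fun y => γ (y 0), γ.continuous.comp (continuous_apply 0)⟩, by
    rintro y ⟨i, hi⟩
    have h0 : y 0 = y i := by rw [Subsingleton.elim (0 : Fin 1) i]
    show γ (y 0) = z0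
    rcases hi with hi | hi
    · rw [h0, hi, γ.source]
    · rw [h0, hi, γ.target]⟩

lemma toPath1_ofPath1 {z0 : Z} (γ : Path z0 z0) : toPath1 (ofPath1 γ) = γ := by
  apply Path.ext; funext t; rfl

lemma pathHomotopic_toPath1_of_homotopic {z0 : Z} {u v : Ω^ (Fin 1) Z z0}
    (h : GenLoop.Homotopic u v) : Path.Homotopic (toPath1 u) (toPath1 v) := by
  obtain ⟨F⟩ := h
  refine ⟨{ toFun := fun q => F (q.1, fun _ => q.2)
            continuous_toFun := F.continuous.comp
              (continuous_fst.prodMk (continuous_pi fun _ => continuous_snd))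
            map_zero_left := fun t => F.apply_zero _
            map_one_left := fun t => F.apply_one _
            prop' := fun s t ht => ?_ }⟩
  show F (s, fun _ => t) = toPath1 u t
  have hb : (fun _ : Fin 1 => t) ∈ Cube.boundary (Fin 1) := by
    rcases ht with ht | ht
    · exact ⟨0, Or.inl (by rw [ht])⟩
    · exact ⟨0, Or.inr (by rw [Set.mem_singleton_iff] at ht; rw [ht])⟩
  exact F.eq_fst s hb

lemma homotopic_of_pathHomotopic_toPath1 {z0 : Z} {u v : Ω^ (Fin 1) Z z0}
    (h : Path.Homotopic (toPath1 u) (toPath1 v)) : GenLoop.Homotopic u v := by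
  obtain ⟨F⟩ := h
  refine ⟨{ toFun := fun q => F (q.1, q.2 0)
            continuous_toFun := F.continuous.comp
              (continuous_fst.prodMk ((continuous_apply 0).comp continuous_snd))
            map_zero_left := fun y => ?_
            map_one_left := fun y => ?_
            prop' := fun s y hy => ?_ }⟩
  · show F (0, y 0) = u y
    rw [F.apply_zero]
    show u (fun _ => y 0) = u y
    exact congrArg _ (funext fun j => by rw [Subsingleton.elim (0 : Fin 1) j])
  · show F (1, y 0) = v y
    rw [F.apply_one]
    show v (fun _ => y 0) = v y
    exact congrArg _ (funext fun j => by rw [Subsingleton.elim (0 : Fin 1) j])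
  · obtain ⟨i, hi⟩ := hy
    have h0 : y 0 = y i := by rw [Subsingleton.elim (0 : Fin 1) i]
    have hy0 : y 0 ∈ ({0, 1} : Set I) := by
      rcases hi with hi | hi
      · exact Or.inl (by rw [h0, hi])
      · exact Or.inr (by rw [Set.mem_singleton_iff, h0, hi])
    show F (s, y 0) = u y
    rw [F.eq_fst s hy0]
    show toPath1 u (y 0) = u y
    exact congrArg _ (funext fun j => by rw [Subsingleton.elim (0 : Fin 1) j])

lemma toPath1_inducedAt {z0 : Z} {w0 : W} (g : C(Z, W)) (hg : g z0 = w0)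
    (u : Ω^ (Fin 1) Z z0) :
    toPath1 (inducedAt g hg u) = pmap (toPath1 u) g g.continuous hg hg := by
  apply Path.ext; funext t; rfl

theorem surjective_loops₁ (f : C(Z, W)) (x0 : Z)
    (hs : Function.Surjective (HomotopyGroup.induced (Fin 1) f x0))
    (V : Path (f x0) (f x0)) :
    ∃ C : Path x0 x0, Path.Homotopic (pmap C f f.continuous rfl rfl) V := by
  obtain ⟨uq, huq⟩ := hs ⟦ofPath1 V⟧
  obtain ⟨u, rfl⟩ := uq.exists_rep
  have hH : GenLoop.Homotopic (inducedAt f rfl u) (ofPath1 V) := Quotient.exact huq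
  have P0 := pathHomotopic_toPath1_of_homotopic hH
  rw [toPath1_ofPath1, toPath1_inducedAt] at P0
  exact ⟨toPath1 u, P0⟩

end dim1

/-! ### path algebra helpers -/

section palg

variable {Z : Type*} [TopologicalSpace Z]

lemma homotopic_symm_congr {a b : Z} {γ δ : Path a b} (h : Path.Homotopic γ δ) :
    Path.Homotopic γ.symm δ.symm := by
  obtain ⟨F⟩ := h
  exact ⟨F.symm₂⟩

/-- `γ.trans (γ.symm.trans δ)` is homotopic to `δ`. -/
lemma homotopic_cancel {a b c : Z} (γ : Path a b) (δ : Path a c) :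
    Path.Homotopic (γ.trans (γ.symm.trans δ)) δ := by
  have h1 : Path.Homotopic (γ.trans (γ.symm.trans δ)) ((γ.trans γ.symm).trans δ) :=
    ⟨(Path.Homotopy.transAssoc γ γ.symm δ).symm⟩
  have h2 : Path.Homotopic ((γ.trans γ.symm).trans δ) ((Path.refl a).trans δ) :=
    Path.Homotopic.hcomp ⟨(Path.Homotopy.reflTransSymm γ).symm⟩ (Path.Homotopic.refl δ)
  have h3 : Path.Homotopic ((Path.refl a).trans δ) δ := ⟨Path.Homotopy.reflTrans δ⟩
  exact (h1.trans h2).trans h3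

end palg

/-! ### the pullback lemmas -/

section main

variable {B E : Type*} [TopologicalSpace B] [TopologicalSpace E]
variable (f : C(X, B)) (p : C(E, B))

/-- the pullback -/
abbrev Pb := {q : X × E // f q.1 = p q.2}

/-- the second projection of the pullback -/
def qMap : C(Pb f p, E) :=
  ⟨fun q => (q : X × E).2, continuous_snd.comp continuous_subtype_val⟩

/-- the first projection of the pullback -/
def rMap : C(Pb f p, X) :=
  ⟨fun q => (q : X × E).1, continuous_fst.comp continuous_subtype_val⟩

variable {f p}

lemma core0_surj (hp : _root_.IsSerreFibration p)
    (h0 : Function.Surjective (ZerothHomotopy.induced f)) (e : E) :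
    ∃ pt : Pb f p, Joined (qMap f p pt) e := by
  letI : Setoid X := pathSetoid X
  letI : Setoid B := pathSetoid B
  obtain ⟨xq, hxq⟩ := h0 ⟦p e⟧
  obtain ⟨x, rfl⟩ := xq.exists_rep
  have hJ : Joined (f x) (p e) := Quotient.exact hxq
  obtain ⟨γ⟩ := hJ
  -- lift the reversed path starting at e
  have hlift := hp 0 ⟨fun z => γ.symm z.2, γ.symm.continuous.comp continuous_snd⟩
    (ContinuousMap.const _ e) (fun y => by
      show p e = γ.symm 0
      rw [Path.source])
  obtain ⟨G, hG1, hG2⟩ := hlift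
  set y0 : Fin 0 → I := fun i => i.elim0 with hy0
  have he' : p (G (y0, 1)) = f x := by
    have := hG1 (y0, 1)
    rw [this]
    show γ.symm 1 = f x
    rw [Path.target]
  refine ⟨⟨(x, G (y0, 1)), he'.symm⟩, ?_⟩
  have δ : Path e (G (y0, 1)) :=
    { toFun := fun t => G (y0, t)
      continuous_toFun := G.continuous.comp (continuous_const.prodMk continuous_id)
      source' := hG2 y0
      target' := rfl }
  exact ⟨δ.symm⟩

lemma core0_inj (hp : _root_.IsSerreFibration p)
    (h0inj : Function.Injective (ZerothHomotopy.induced f))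
    (h1surj : ∀ x : X, Function.Surjective (HomotopyGroup.induced (Fin 1) f x))
    (a b : Pb f p) (hJ : Joined (qMap f p a) (qMap f p b)) : Joined a b := by
  letI : Setoid X := pathSetoid X
  letI : Setoid B := pathSetoid B
  obtain ⟨γE⟩ := hJ
  -- γE : Path a.1.2 b.1.2
  set Kp : Path (f ((a : X × E).1)) (f ((b : X × E).1)) :=
    pmap γE p p.continuous a.2.symm b.2.symm with hKp
  have hXJ : Joined ((a : X × E).1) ((b : X × E).1) := by
    apply Quotient.exact (h0inj (a₁ := ⟦(a : X × E).1⟧) (a₂ := ⟦(b : X × E).1⟧) ?_)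
    show (⟦f ((a : X × E).1)⟧ : ZerothHomotopy B) = ⟦f ((b : X × E).1)⟧
    exact Quotient.sound ⟨Kp⟩
  obtain ⟨M₀⟩ := hXJ
  set M₀f : Path (f ((a : X × E).1)) (f ((b : X × E).1)) :=
    pmap M₀ f f.continuous rfl rfl with hM₀f
  -- the discrepancy loop at `f b.1`
  set V : Path (f ((b : X × E).1)) (f ((b : X × E).1)) := Kp.symm.trans M₀f with hV
  obtain ⟨C, hC⟩ := surjective_loops₁ f ((b : X × E).1) (h1surj _) V
  set M : Path ((a : X × E).1) ((b : X × E).1) := M₀.trans C.symm with hM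
  have hMf : Path.Homotopic (pmap M f f.continuous rfl rfl) Kp := by
    have e1 : pmap M f f.continuous rfl rfl =
        M₀f.trans (pmap C f f.continuous rfl rfl).symm := by
      rw [hM, pmap_trans M₀ C.symm f f.continuous rfl rfl rfl, pmap_symm]
    rw [e1]
    have h2 : Path.Homotopic (M₀f.trans (pmap C f f.continuous rfl rfl).symm)
        (M₀f.trans V.symm) :=
      Path.Homotopic.hcomp (Path.Homotopic.refl M₀f) (homotopic_symm_congr hC)
    refine h2.trans ?_
    have e3 : V.symm = M₀f.symm.trans Kp.symm.symm := by rw [hV, Path.trans_symm]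
    rw [e3]
    have h4 : Path.Homotopic (M₀f.trans (M₀f.symm.trans Kp.symm.symm)) Kp.symm.symm :=
      homotopic_cancel M₀f Kp.symm.symm
    refine h4.trans ?_
    rw [Path.symm_symm]
  -- lift the homotopy between `Kp` and `f ∘ M`
  obtain ⟨F⟩ := hMf.symm
  -- F : Path.Homotopy Kp (pmap M f ...)
  have hbd : ∀ y ∈ Cube.boundary (Fin 1), ∀ t : I,
      (⟨fun z => F (z.2, z.1 0), F.continuous.comp
        (continuous_snd.prodMk ((continuous_apply 0).comp continuous_fst))⟩ :
        C((Fin 1 → I) × I, B)) (y, t) =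
      (⟨fun z => F (z.2, z.1 0), F.continuous.comp
        (continuous_snd.prodMk ((continuous_apply 0).comp continuous_fst))⟩ :
        C((Fin 1 → I) × I, B)) (y, 0) := by
    rintro y ⟨i, hi⟩ t
    have h0 : y 0 = y i := by rw [Subsingleton.elim (0 : Fin 1) i]
    show F (t, y 0) = F (0, y 0)
    rcases hi with hi | hi
    · rw [h0, hi]
      show F (t, 0) = F (0, 0)
      rw [F.source, F.source]
    · rw [h0, hi]
      show F (t, 1) = F (0, 1)
      rw [F.target, F.target]
  obtain ⟨G, hG1, hG2, hG3⟩ := serre_relative hp 1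
    ⟨fun z => F (z.2, z.1 0), F.continuous.comp
      (continuous_snd.prodMk ((continuous_apply 0).comp continuous_fst))⟩
    ⟨fun y => γE (y 0), γE.continuous.comp (continuous_apply 0)⟩
    (fun y => by
      show p (γE (y 0)) = F (0, y 0)
      rw [F.apply_zero]
      rfl)
    hbd
  -- assemble the path in the pullback
  have key : ∀ t : I, f (M t) = p (G (fun _ => t, 1)) := by
    intro t
    rw [hG1 (fun _ => t, 1)]
    show f (M t) = F (1, t)
    rw [F.apply_one]
    rfl
  have Λ : Path a b :=
    { toFun := fun t => ⟨(M t, G (fun _ => t, 1)), key t⟩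
      continuous_toFun := by
        apply Continuous.subtype_mk
        exact (M.continuous.prodMk (G.continuous.comp
          ((continuous_pi fun _ => continuous_id).prodMk continuous_const)))
      source' := by
        apply Subtype.ext
        show (M 0, G (fun _ => (0:I), 1)) = (a : X × E)
        have hb0 : (fun _ : Fin 1 => (0:I)) ∈ Cube.boundary (Fin 1) := ⟨0, Or.inl rfl⟩
        rw [hG3 _ hb0 1]
        show (M 0, γE 0) = (a : X × E)
        rw [M.source, γE.source]
        exact Prod.mk.eta
      target' := by
        apply Subtype.ext
        show (M 1, G (fun _ => (1:I), 1)) = (b : X × E)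
        have hb1 : (fun _ : Fin 1 => (1:I)) ∈ Cube.boundary (Fin 1) := ⟨0, Or.inr rfl⟩
        rw [hG3 _ hb1 1]
        show (M 1, γE 1) = (b : X × E)
        rw [M.target, γE.target]
        exact Prod.mk.eta }
  exact ⟨Λ⟩

end main

/-! ### bijectivity on higher homotopy groups of the pullback -/

section piN

variable {B E : Type*} [TopologicalSpace B] [TopologicalSpace E]
variable {f : C(X, B)} {p : C(E, B)}

lemma surjPi (hp : _root_.IsSerreFibration p) {m : ℕ} (pt0 : Pb f p)
    (hsf : Function.Surjective (HomotopyGroup.induced (Fin (m+1)) f (pt0 : X × E).1)) :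
    Function.Surjective (HomotopyGroup.induced (Fin (m+1)) (qMap f p) pt0) := by
  intro wq
  obtain ⟨γ, rfl⟩ := wq.exists_rep
  have hfp : f (pt0 : X × E).1 = p ((qMap f p) pt0) := pt0.2
  set wB : Ω^ (Fin (m+1)) B (f (pt0 : X × E).1) := inducedAt p hfp.symm γ with hwB
  obtain ⟨uq, huq⟩ := hsf ⟦wB⟧
  obtain ⟨u, rfl⟩ := uq.exists_rep
  have hu : GenLoop.Homotopic (inducedAt f rfl u) wB := by
    rw [← genLoop_induced_eq_inducedAt]
    exact Quotient.exact huq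
  obtain ⟨ρ⟩ := joined_of_homotopic hu
  set Hc : C((Fin (m+1) → I) × I, B) :=
    ⟨fun z => ρ.symm z.2 z.1, continuous_eval.comp
      ((ρ.symm.continuous.comp continuous_snd).prodMk continuous_fst)⟩ with hHc
  obtain ⟨G, hG1, hG2, hG3⟩ := serre_relative hp (m+1) Hc γ.1
    (fun y => by
      show p (γ.1 y) = ρ.symm 0 y
      rw [Path.source]
      rfl)
    (fun y hy t => by
      show ρ.symm t y = ρ.symm 0 y
      rw [GenLoop.boundary (ρ.symm t) y hy, GenLoop.boundary (ρ.symm 0) y hy])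
  have key : ∀ y, f (u y) = p (G (y, 1)) := fun y => by
    rw [hG1 (y, 1)]
    show f (u y) = ρ.symm 1 y
    rw [Path.target]
    rfl
  set c : Ω^ (Fin (m+1)) (Pb f p) pt0 :=
    ⟨⟨fun y => ⟨(u y, G (y, 1)), key y⟩,
      Continuous.subtype_mk (u.1.continuous.prodMk
        (G.continuous.comp (continuous_id.prodMk continuous_const))) _⟩, by
      intro y hy
      apply Subtype.ext
      show (u y, G (y, 1)) = (pt0 : X × E)
      rw [hG3 y hy 1]
      show (u y, γ.1 y) = (pt0 : X × E)
      rw [GenLoop.boundary u y hy]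
      have : γ.1 y = (qMap f p) pt0 := GenLoop.boundary γ y hy
      rw [this]
      exact Prod.mk.eta⟩ with hc
  refine ⟨⟦c⟧, ?_⟩
  show (⟦GenLoop.induced (qMap f p) c⟧ : HomotopyGroup _ _ _) = ⟦γ⟧
  apply Quotient.sound
  rw [genLoop_induced_eq_inducedAt]
  apply homotopic_of_joined
  set F2 : C(I × (Fin (m+1) → I), E) :=
    ⟨fun z => G (z.2, unitInterval.symm z.1),
      G.continuous.comp (continuous_snd.prodMk
        (unitInterval.continuous_symm.comp continuous_fst))⟩ with hF2
  have bd2 : ∀ s : I, ∀ y ∈ Cube.boundary (Fin (m+1)),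
      F2.curry s y = (qMap f p) pt0 := by
    intro s y hy
    show G (y, unitInterval.symm s) = _
    rw [hG3 y hy _]
    exact GenLoop.boundary γ y hy
  refine ⟨{ toFun := fun s => ⟨F2.curry s, bd2 s⟩
            continuous_toFun := (F2.curry.continuous).subtype_mk _
            source' := ?_
            target' := ?_ }⟩
  · apply GenLoop.ext
    intro y
    show G (y, unitInterval.symm 0) = inducedAt (qMap f p) rfl c y
    rw [unitInterval.symm_zero]
    rfl
  · apply GenLoop.ext
    intro y
    show G (y, unitInterval.symm 1) = γ y
    rw [unitInterval.symm_one]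
    exact hG2 y

lemma induced_mul {Z W : Type*} [TopologicalSpace Z] [TopologicalSpace W]
    (g : C(Z, W)) (z0 : Z) {m : ℕ}
    (A B' : HomotopyGroup (Fin (m+1)) Z z0) :
    HomotopyGroup.induced (Fin (m+1)) g z0 (A * B') =
      HomotopyGroup.induced (Fin (m+1)) g z0 A *
        HomotopyGroup.induced (Fin (m+1)) g z0 B' := by
  induction A using Quotient.ind with
  | _ a =>
  induction B' using Quotient.ind with
  | _ b =>
  have hmul1 := @HomotopyGroup.mul_spec (Fin (m+1)) Z _ z0 _ _ (0 : Fin (m+1)) a b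
  have hmul2 := @HomotopyGroup.mul_spec (Fin (m+1)) W _ (g z0) _ _ (0 : Fin (m+1))
    (GenLoop.induced g a) (GenLoop.induced g b)
  have mid : (⟦GenLoop.induced g (GenLoop.transAt 0 b a)⟧ :
        HomotopyGroup (Fin (m+1)) W (g z0))
      = ⟦GenLoop.transAt 0 (GenLoop.induced g b) (GenLoop.induced g a)⟧ := by
    apply congrArg
    rw [genLoop_induced_eq_inducedAt, genLoop_induced_eq_inducedAt,
      genLoop_induced_eq_inducedAt, inducedAt_transAt]
  exact (congrArg (HomotopyGroup.induced (Fin (m+1)) g z0) hmul1).trans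
    (mid.trans hmul2.symm)

lemma injPi (hp : _root_.IsSerreFibration p) {m : ℕ} (pt0 : Pb f p)
    (hinjf : Function.Injective (HomotopyGroup.induced (Fin (m+1)) f (pt0 : X × E).1))
    (hsurjf2 : Function.Surjective (HomotopyGroup.induced (Fin (m+2)) f (pt0 : X × E).1)) :
    Function.Injective (HomotopyGroup.induced (Fin (m+1)) (qMap f p) pt0) := by
  have hker : ∀ cq : HomotopyGroup (Fin (m+1)) (Pb f p) pt0,
      HomotopyGroup.induced (Fin (m+1)) (qMap f p) pt0 cq = 1 → cq = 1 := by
    intro cq hcq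
    obtain ⟨c, rfl⟩ := cq.exists_rep
    rw [HomotopyGroup.one_def] at hcq
    have hc : GenLoop.Homotopic (inducedAt (qMap f p) rfl c) GenLoop.const := by
      rw [← genLoop_induced_eq_inducedAt]
      exact Quotient.exact hcq
    have hfp : f (pt0 : X × E).1 = p ((qMap f p) pt0) := pt0.2
    set cX : Ω^ (Fin (m+1)) X (pt0 : X × E).1 := inducedAt (rMap f p) rfl c with hcX
    obtain ⟨K⟩ := joined_of_homotopic hc
    have ha : inducedAt p hfp.symm (inducedAt (qMap f p) rfl c) = inducedAt f rfl cX :=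
      GenLoop.ext _ _ fun y => ((c y).2).symm
    set Kp : Path (inducedAt f rfl cX) (GenLoop.const) :=
      pmap K (inducedAt p hfp.symm) (continuous_inducedAt p hfp.symm) ha
        (inducedAt_const p hfp.symm) with hKp
    have hX1 : (HomotopyGroup.induced (Fin (m+1)) f (pt0 : X × E).1) ⟦cX⟧
        = (HomotopyGroup.induced (Fin (m+1)) f (pt0 : X × E).1) ⟦GenLoop.const⟧ := by
      show (⟦GenLoop.induced f cX⟧ : HomotopyGroup _ _ _) = ⟦GenLoop.induced f GenLoop.const⟧
      rw [genLoop_induced_eq_inducedAt, genLoop_induced_eq_inducedAt,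
        inducedAt_const]
      exact Quotient.sound (homotopic_of_joined ⟨Kp⟩)
    obtain ⟨M₀⟩ := joined_of_homotopic (Quotient.exact (hinjf hX1))
    set M₀f : Path (inducedAt f rfl cX) (GenLoop.const) :=
      pmap M₀ (inducedAt f rfl) (continuous_inducedAt f rfl) rfl
        (inducedAt_const f rfl) with hM₀f
    set W : Path (GenLoop.const : Ω^ (Fin (m+1)) B (f (pt0 : X × E).1)) GenLoop.const :=
      M₀f.symm.trans Kp with hW
    obtain ⟨C, hC⟩ := surjective_loops f (pt0 : X × E).1 hsurjf2 W
    set M : Path cX GenLoop.const := M₀.trans C with hM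
    have hMf : Path.Homotopic (pmap M (inducedAt f rfl) (continuous_inducedAt f rfl)
        rfl (inducedAt_const f rfl)) Kp := by
      rw [hM, pmap_trans M₀ C (inducedAt f rfl) (continuous_inducedAt f rfl)
        rfl (inducedAt_const f rfl) (inducedAt_const f rfl)]
      refine (Path.Homotopic.hcomp (Path.Homotopic.refl M₀f) hC).trans ?_
      exact homotopic_cancel M₀f Kp
    obtain ⟨F⟩ := hMf.symm
    set Hc : C(((Fin (m+1) → I) × I) × I, B) :=
      ⟨fun w => F (w.2, w.1.2) w.1.1,
        continuous_eval.comp ((F.continuous.comp (continuous_snd.prodMk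
          (continuous_snd.comp continuous_fst))).prodMk
          (continuous_fst.comp continuous_fst))⟩ with hHc
    set hK : C((Fin (m+1) → I) × I, E) :=
      ⟨fun z => K z.2 z.1, continuous_eval.comp
        ((K.continuous.comp continuous_snd).prodMk continuous_fst)⟩ with hhK
    obtain ⟨G, hG1, hG2, hG3⟩ := serre_relative_prod hp (m+1) Hc hK
      (fun z => by
        show p (K z.2 z.1) = F (0, z.2) z.1
        rw [F.apply_zero]
        rfl)
      (by
        rintro ⟨y, t⟩ (hy | ht | ht) s
        · show F (s, t) y = F (0, t) y
          rw [GenLoop.boundary (F (s, t)) y hy, GenLoop.boundary (F (0, t)) y hy]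
        · show F (s, t) y = F (0, t) y
          subst ht
          rw [F.source, F.source]
        · show F (s, t) y = F (0, t) y
          subst ht
          rw [F.target, F.target])
    have key : ∀ (t : I) (y : Fin (m+1) → I), f (M t y) = p (G ((y, t), 1)) := by
      intro t y
      rw [hG1 ((y, t), 1)]
      show f (M t y) = F (1, t) y
      rw [F.apply_one]
      rfl
    set F3 : C(I × (Fin (m+1) → I), Pb f p) :=
      ⟨fun z => ⟨(M z.1 z.2, G ((z.2, z.1), 1)), key z.1 z.2⟩,
        Continuous.subtype_mk
          ((continuous_eval.comp ((M.continuous.comp continuous_fst).prodMk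
            continuous_snd)).prodMk
            (G.continuous.comp ((continuous_snd.prodMk continuous_fst).prodMk
              continuous_const))) _⟩ with hF3
    have bd3 : ∀ s : I, ∀ y ∈ Cube.boundary (Fin (m+1)), F3.curry s y = pt0 := by
      intro s y hy
      apply Subtype.ext
      show (M s y, G ((y, s), 1)) = (pt0 : X × E)
      rw [hG3 (y, s) (Or.inl hy) 1]
      show (M s y, K s y) = (pt0 : X × E)
      rw [GenLoop.boundary (M s) y hy, GenLoop.boundary (K s) y hy]
      exact Prod.mk.eta
    have hΛ : Joined c (GenLoop.const : Ω^ (Fin (m+1)) (Pb f p) pt0) := by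
      refine ⟨{ toFun := fun s => ⟨F3.curry s, bd3 s⟩
                continuous_toFun := (F3.curry.continuous).subtype_mk _
                source' := ?_
                target' := ?_ }⟩
      · apply GenLoop.ext
        intro y
        apply Subtype.ext
        show (M 0 y, G ((y, 0), 1)) = ↑(c y)
        rw [hG3 (y, (0:I)) (Or.inr (Or.inl rfl)) 1]
        show (M 0 y, K 0 y) = ↑(c y)
        rw [Path.source, Path.source]
        exact Prod.mk.eta
      · apply GenLoop.ext
        intro y
        apply Subtype.ext
        show (M 1 y, G ((y, 1), 1)) = (pt0 : X × E)
        rw [hG3 (y, (1:I)) (Or.inr (Or.inr rfl)) 1]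
        show (M 1 y, K 1 y) = (pt0 : X × E)
        rw [Path.target, Path.target]
        exact Prod.mk.eta
    rw [HomotopyGroup.one_def]
    exact Quotient.sound (homotopic_of_joined hΛ)
  -- conclude injectivity from triviality of the kernel
  set φ : HomotopyGroup (Fin (m+1)) (Pb f p) pt0 →*
      HomotopyGroup (Fin (m+1)) E ((qMap f p) pt0) :=
    MonoidHom.mk' (HomotopyGroup.induced (Fin (m+1)) (qMap f p) pt0)
      (fun A B' => induced_mul (qMap f p) pt0 A B') with hφ
  exact (injective_iff_map_eq_one φ).2 hker

end piN

end RightProper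

open RightProper in
/-- Right properness of topological spaces: the pullback of a weak homotopy equivalence
along a Serre fibration is a weak homotopy equivalence. -/
theorem pullback_weakEquiv_along_serreFibration
    {B E : Type*} [TopologicalSpace B] [TopologicalSpace E]
    (f : C(X, B)) (p : C(E, B))
    (hp : IsSerreFibration p) (hf : IsWeakHomotopyEquiv f) :
    IsWeakHomotopyEquiv
      (⟨fun q : {q : X × E // f q.1 = p q.2} => (q : X × E).2,
        continuous_snd.comp continuous_subtype_val⟩ :
        C({q : X × E // f q.1 = p q.2}, E)) := by
  show IsWeakHomotopyEquiv (qMap f p)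
  obtain ⟨⟨h0inj, h0surj⟩, hn⟩ := hf
  constructor
  · constructor
    · -- injectivity on path components
      intro aq bq h
      induction aq using Quotient.ind with | _ a =>
      induction bq using Quotient.ind with | _ b =>
      exact Quotient.sound
        (core0_inj hp h0inj (fun x => (hn 1 x).2) a b (Quotient.exact h))
    · -- surjectivity on path components
      intro eq
      induction eq using Quotient.ind with | _ e =>
      obtain ⟨pt, hpt⟩ := core0_surj hp h0surj e
      exact ⟨Quotient.mk (pathSetoid _) pt, Quotient.sound hpt⟩
  · intro n pt0
    match n with
    | 0 =>
      constructor
      · intro aq bq h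
        induction aq using Quotient.ind with | _ a =>
        induction bq using Quotient.ind with | _ b =>
        obtain ⟨ρ⟩ := joined_of_homotopic
          (Quotient.exact (α := ↑(Ω^ (Fin 0) E ((qMap f p) pt0))) h)
        have hJ : Joined ((qMap f p) ((genLoopHomeoOfIsEmpty (Fin 0) pt0) a))
            ((qMap f p) ((genLoopHomeoOfIsEmpty (Fin 0) pt0) b)) :=
          ⟨pmap ρ (genLoopHomeoOfIsEmpty (Fin 0) ((qMap f p) pt0))
            (genLoopHomeoOfIsEmpty (Fin 0) ((qMap f p) pt0)).continuous rfl rfl⟩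
        obtain ⟨lp⟩ := core0_inj hp h0inj (fun x => (hn 1 x).2) _ _ hJ
        apply Quotient.sound
        apply homotopic_of_joined
        exact ⟨pmap lp (genLoopHomeoOfIsEmpty (Fin 0) pt0).symm
          (genLoopHomeoOfIsEmpty (Fin 0) pt0).symm.continuous
          ((genLoopHomeoOfIsEmpty (Fin 0) pt0).symm_apply_apply a)
          ((genLoopHomeoOfIsEmpty (Fin 0) pt0).symm_apply_apply b)⟩
      · intro wq
        induction wq using Quotient.ind with | _ w =>
        obtain ⟨pt, hpt⟩ := core0_surj hp h0surj
          ((genLoopHomeoOfIsEmpty (Fin 0) ((qMap f p) pt0)) w)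
        refine ⟨⟦(genLoopHomeoOfIsEmpty (Fin 0) pt0).symm pt⟧, ?_⟩
        apply Quotient.sound
        apply homotopic_of_joined
        obtain ⟨δ⟩ := hpt
        refine ⟨pmap δ (genLoopHomeoOfIsEmpty (Fin 0) ((qMap f p) pt0)).symm
          (genLoopHomeoOfIsEmpty (Fin 0) ((qMap f p) pt0)).symm.continuous
          (GenLoop.ext _ _ fun y => rfl)
          ((genLoopHomeoOfIsEmpty (Fin 0) ((qMap f p) pt0)).symm_apply_apply w)⟩
    | (m+1) =>
      exact ⟨injPi hp pt0 (hn (m+1) _).1 (hn (m+2) _).2, surjPi hp pt0 (hn (m+1) _).2⟩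

end
end

section
/- Let D be a small category and X : D → Type* a functor (a diagram of sets/spaces). If T : D → Type* satisfies colim_D T = * (a one-point set), then T is connected in the sense that any natural transformation from T to a coproduct X ⊔ Y of diagrams factors through one of the summands. -/
/-!
Recording which summand an element lies in is a natural transformation `X ⨿ Y ⟶ const Bool`.
Composed with `α` it is a cocone on `T` with vertex `Bool`, which factors through the
subsingleton `colim T`; so all components of `α` land in the same summand, and `α` factors
through it because the coproduct inclusions are monomorphisms.
-/

open CategoryTheory CategoryTheory.Limits

universe v w

namespace CategoryTheory

variable {C : Type*} [Category C]

namespace FunctorToTypes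

theorem exists_comp_eq_of_range_le_range {F G H : C ⥤ Type w} (f : F ⟶ H) (m : G ⟶ H) [Mono m]
    (h : Subfunctor.range f ≤ Subfunctor.range m) : ∃ g : F ⟶ G, g ≫ m = f :=
  ⟨Subfunctor.lift f h ≫ inv (Subfunctor.toRange m), calc
    _ = (Subfunctor.lift f h ≫ inv (Subfunctor.toRange m)) ≫ Subfunctor.toRange m ≫
        (Subfunctor.range m).ι := by rw [Subfunctor.toRange_ι]
    _ = f := by rw [Category.assoc, IsIso.inv_hom_id_assoc, Subfunctor.lift_ι]⟩

theorem app_eq_of_subsingleton_colimit {T : C ⥤ Type w} [HasColimit T]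
    [Subsingleton (colimit T)] {A : Type w} (f : T ⟶ (Functor.const C).obj A)
    (c c' : C) (t : T.obj c) (t' : T.obj c') : f.app c t = f.app c' t' := by
  let s : Cocone T := ⟨A, f⟩
  rw [← colimit.ι_desc_apply s c t, ← colimit.ι_desc_apply s c' t',
    Subsingleton.elim (colimit.ι T c t) (colimit.ι T c' t')]

end FunctorToTypes

section Coprod

variable (X Y : C ⥤ Type w)

noncomputable def coprodSide : X ⨿ Y ⟶ (Functor.const C).obj (ULift.{w} Bool) :=
  coprod.desc ({ app _ := ↾fun _ => ⟨false⟩ } : X ⟶ (Functor.const C).obj (ULift.{w} Bool))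
    { app _ := ↾fun _ => ⟨true⟩ }

variable {X Y}

theorem coprodSide_app_inl {c : C} (x : X.obj c) :
    (coprodSide X Y).app c ((coprod.inl : X ⟶ X ⨿ Y).app c x) = ⟨false⟩ :=
  ConcreteCategory.congr_hom (congr_app (coprod.inl_desc (X := X) (Y := Y) _ _) c) x

theorem coprodSide_app_inr {c : C} (y : Y.obj c) :
    (coprodSide X Y).app c ((coprod.inr : Y ⟶ X ⨿ Y).app c y) = ⟨true⟩ :=
  ConcreteCategory.congr_hom (congr_app (coprod.inr_desc (X := X) (Y := Y) _ _) c) y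

theorem mem_range_inl_or_mem_range_inr {c : C} (z : (X ⨿ Y).obj c) :
    z ∈ Set.range ((coprod.inl : X ⟶ X ⨿ Y).app c) ∨
      z ∈ Set.range ((coprod.inr : Y ⟶ X ⨿ Y).app c) := by
  obtain ⟨⟨_ | _⟩, w, rfl⟩ := FunctorToTypes.jointly_surjective' (pair X Y) c z
  exacts [Or.inl ⟨w, rfl⟩, Or.inr ⟨w, rfl⟩]

theorem mem_range_inr_iff {c : C} (z : (X ⨿ Y).obj c) :
    z ∈ Set.range ((coprod.inr : Y ⟶ X ⨿ Y).app c) ↔ (coprodSide X Y).app c z = ⟨true⟩ := by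
  refine ⟨fun ⟨y, hy⟩ => hy ▸ coprodSide_app_inr y, fun h => ?_⟩
  rcases mem_range_inl_or_mem_range_inr z with ⟨x, rfl⟩ | hz
  · rw [coprodSide_app_inl] at h; cases h
  · exact hz

theorem range_le_range_inl_or_range_le_range_inr {T : C ⥤ Type w} (α : T ⟶ X ⨿ Y)
    (hα : ∀ c c' (t : T.obj c) (t' : T.obj c'),
      (coprodSide X Y).app c (α.app c t) = (coprodSide X Y).app c' (α.app c' t')) :
    Subfunctor.range α ≤ Subfunctor.range coprod.inl ∨
      Subfunctor.range α ≤ Subfunctor.range coprod.inr := by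
  by_cases h : ∃ c t, (coprodSide X Y).app c (α.app c t) = ⟨true⟩
  · obtain ⟨c, t, ht⟩ := h
    refine Or.inr fun c' _ ⟨t', ht'⟩ => ?_
    rw [← ht', Subfunctor.range_obj, mem_range_inr_iff, hα c' c t' t, ht]
  · refine Or.inl fun c _ ⟨t, ht⟩ => ht ▸ ?_
    exact (mem_range_inl_or_mem_range_inr (α.app c t)).resolve_right
      fun hr => h ⟨c, t, (mem_range_inr_iff _).1 hr⟩

end Coprod

end CategoryTheory

theorem orbit_connected_general {D : Type v} [SmallCategory D]
    (T X Y : D ⥤ Type v)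
    (h₂ : Subsingleton (colimit T)) :
    ∀ α : T ⟶ X ⨿ Y,
      (∃ β : T ⟶ X, β ≫ coprod.inl = α) ∨ (∃ β : T ⟶ Y, β ≫ coprod.inr = α) := by
  intro α
  rcases range_le_range_inl_or_range_le_range_inr α
    (FunctorToTypes.app_eq_of_subsingleton_colimit (α ≫ coprodSide X Y)) with h | h
  exacts [Or.inl (FunctorToTypes.exists_comp_eq_of_range_le_range α _ h),
    Or.inr (FunctorToTypes.exists_comp_eq_of_range_le_range α _ h)]

/-- Orbits are connected: if `T : D ⥤ Type` has a one-point colimit, then any natural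
transformation from `T` to a coproduct of diagrams factors through one of the summands. -/
theorem orbit_connected {D : Type v} [SmallCategory D]
    (T X Y : D ⥤ Type v)
    (h₁ : Nonempty (colimit T)) (h₂ : Subsingleton (colimit T)) :
    ∀ α : T ⟶ X ⨿ Y,
      (∃ β : T ⟶ X, β ≫ coprod.inl = α) ∨ (∃ β : T ⟶ Y, β ≫ coprod.inr = α) :=
  orbit_connected_general T X Y h₂
end

section
/- For the category D = (• → •), every diagram of the form T_X = (X → *) for an arbitrary set X is an orbit: colim_D T_X ≅ *. Moreover if X is nonempty then T_X is a regular orbit (lim T_X ≅ X ≠ ∅). Consequently there is a proper class (one for each set X up to isomorphism) of pairwise non-isomorphic regular orbits over D. -/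
open CategoryTheory CategoryTheory.Limits

universe u

/-! `0` is initial and `1` is terminal in `Fin 2`, so the limit of a diagram over it is its
value at `0` and the colimit its value at `1`. A one-point set is terminal in `Type u`, so
between two such diagrams every naturality square commutes and an isomorphism is just a
bijection of the values at `0`. -/

namespace CategoryTheory.ComposableArrows

variable {C : Type*} [Category C]

theorem nonempty_iso_iff_of_isTerminal_obj_one {F G : ComposableArrows C 1}
    (hF : IsTerminal (F.obj' 1)) (hG : IsTerminal (G.obj' 1)) :
    Nonempty (F ≅ G) ↔ Nonempty (F.obj' 0 ≅ G.obj' 0) :=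
  ⟨fun ⟨i⟩ => ⟨i.app 0⟩, fun ⟨e⟩ => ⟨isoMk₁ e (hF.uniqueUpToIso hG) (hG.hom_ext _ _)⟩⟩

end CategoryTheory.ComposableArrows

namespace CategoryTheory.Limits.Types

theorem nonempty_isTerminal_iff (X : Type u) :
    Nonempty (IsTerminal X) ↔ Nonempty X ∧ Subsingleton X :=
  ((isTerminalEquivUnique X).nonempty_congr.trans
    (unique_iff_subsingleton_and_nonempty X)).trans and_comm

end CategoryTheory.Limits.Types

/-- Over the walking arrow `D = (0 → 1)` (realized as the preorder `Fin 2`), every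
diagram `T_X = (X → *)` is an orbit; its limit is `X`, so it is regular whenever `X` is
nonempty; and two such orbits are isomorphic iff the corresponding sets are equivalent,
so that there is a proper class of pairwise non-isomorphic regular orbits. -/
theorem arrow_diagrams_regular_orbits
    (X X' : Type u) (T T' : Fin 2 ⥤ Type u)
    (e : T.obj 0 ≃ X) (h1n : Nonempty (T.obj 1)) (h1s : Subsingleton (T.obj 1))
    (e' : T'.obj 0 ≃ X') (h1n' : Nonempty (T'.obj 1)) (h1s' : Subsingleton (T'.obj 1)) :
    (Nonempty (colimit T) ∧ Subsingleton (colimit T)) ∧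
    Nonempty (limit T ≃ X) ∧
    (Nonempty X → Nonempty (limit T)) ∧
    (Nonempty (T ≅ T') ↔ Nonempty (X ≃ X')) := by
  obtain ⟨hT⟩ := (Types.nonempty_isTerminal_iff (T.obj 1)).2 ⟨h1n, h1s⟩
  obtain ⟨hT'⟩ := (Types.nonempty_isTerminal_iff (T'.obj 1)).2 ⟨h1n', h1s'⟩
  let colimitIso : colimit T ≅ T.obj 1 :=
    (colimit.isColimit T).coconePointUniqueUpToIso (colimitOfDiagramTerminal isTerminalTop T)
  let limitEquiv : limit T ≃ X :=
    ((limit.isLimit T).conePointUniqueUpToIso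
      (limitOfDiagramInitial isInitialBot T)).toEquiv.trans e
  refine ⟨(Types.nonempty_isTerminal_iff _).1 ⟨hT.ofIso colimitIso.symm⟩,
    ⟨limitEquiv⟩, fun ⟨x⟩ => ⟨limitEquiv.symm x⟩, ?_⟩
  calc Nonempty (T ≅ T') ↔ Nonempty (T.obj 0 ≅ T'.obj 0) :=
        ComposableArrows.nonempty_iso_iff_of_isTerminal_obj_one hT hT'
    _ ↔ Nonempty (X ≃ X') := (equivEquivIso.symm.trans (e.equivCongr e')).nonempty_congr
end
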